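/- arXiv:1312.4155 — 4 statements merged into one kernel-verified Lean document; each statement's English description precedes it below -/
import Mathlib

section
/- Let ẋ = Ax + Bu (u ∈ U) be a linear control system on ℝⁿ and let ẋ = (A + BC)x + Bu (u ∈ U) be the system obtained by adding a linear feedback with an m×n matrix C. If D(T) and D̃(T) denote the respective reachable sets from the origin at time T, then the Banach–Mazur distance satisfies ρ(D(T), D̃(T)) = O(T) as T → 0; i.e., there exist constants c > 0, T₀ > 0 with ρ(D(T), D̃(T)) ≤ c·T for all 0 < T < T₀. -/
/-!
Along a trajectory `x` of the feedback system, Duhamel's formula shows that `x` is also the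
trajectory of `ẋ = A x + B (u + C x)`. The formula is proved by integrating by parts against the
primitive of the (merely integrable) control, using Fubini on a triangle. For `T ≤ 1` one has
`‖C x(s)‖ = O(T)`, and `U` is convex and contains a ball around `0`, so `u + C x` takes values
in `(1 + c T) U`; hence `D̃(T) ⊆ (1 + c T) D(T)`. The same applied to `A + BC` with feedback `-C`
gives the reverse inclusion, and `ρ ≤ log (1 + c₁ T) + log (1 + c₂ T) ≤ (c₁ + c₂) T`.
-/

open MeasureTheory Matrix Set Filter Topology Pointwise

/-- Support function of a set with respect to the dot product. -/
noncomputable def suppFn {ι : Type*} [Fintype ι] (Ω : Set (ι → ℝ)) (ξ : ι → ℝ) : ℝ :=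
  sSup ((fun x => x ⬝ᵥ ξ) '' Ω)

/-- A centrally symmetric convex body: compact, convex, nonempty interior, `Ω = -Ω`. -/
def IsSymConvexBody {ι : Type*} [Fintype ι] (Ω : Set (ι → ℝ)) : Prop :=
  IsCompact Ω ∧ Convex ℝ Ω ∧ (interior Ω).Nonempty ∧ Ω = -Ω

/-- `t(Ω₁, Ω₂) = inf { t ≥ 1 : tΩ₁ ⊇ Ω₂ }`. -/
noncomputable def bmFactor {ι : Type*} [Fintype ι] (Ω₁ Ω₂ : Set (ι → ℝ)) : ℝ :=
  sInf {t : ℝ | 1 ≤ t ∧ Ω₂ ⊆ t • Ω₁}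

/-- The Banach–Mazur distance `ρ(Ω₁, Ω₂) = log (t(Ω₁,Ω₂) · t(Ω₂,Ω₁))`. -/
noncomputable def bmDist {ι : Type*} [Fintype ι] (Ω₁ Ω₂ : Set (ι → ℝ)) : ℝ :=
  Real.log (bmFactor Ω₁ Ω₂ * bmFactor Ω₂ Ω₁)

/-- Distance between shapes: `ρ(Sh Ω₁, Sh Ω₂) = inf over invertible g of ρ(g Ω₁, Ω₂)`. -/
noncomputable def shapeDist {ι : Type*} [Fintype ι] [DecidableEq ι] (Ω₁ Ω₂ : Set (ι → ℝ)) : ℝ :=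
  sInf {r : ℝ | ∃ g : Matrix ι ι ℝ, IsUnit g ∧ r = bmDist (g.mulVec '' Ω₁) Ω₂}

/-- The shape of a set: its orbit under the action of invertible matrices. -/
def shapeOrbit {ι : Type*} [Fintype ι] [DecidableEq ι] (Ω : Set (ι → ℝ)) :
    Set (Set (ι → ℝ)) :=
  {S | ∃ g : Matrix ι ι ℝ, IsUnit g ∧ S = g.mulVec '' Ω}

/-- Reachable set at time `T` from the origin of `ẋ = Ax + Bu`, `u(s) ∈ U`. -/
noncomputable def reachable {ι κ : Type*} [Fintype ι] [DecidableEq ι] [Fintype κ]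
    (A : Matrix ι ι ℝ) (B : Matrix ι κ ℝ) (U : Set (κ → ℝ)) (T : ℝ) : Set (ι → ℝ) :=
  { x | ∃ u : ℝ → κ → ℝ, Measurable u ∧ (∀ s, u s ∈ U) ∧
      x = ∫ s in (0:ℝ)..T, (NormedSpace.exp ((T - s) • A)) *ᵥ (B *ᵥ u s) }

/-- The Kalman controllability condition: the columns of `B, AB, …, A^{n-1}B` span `ℝⁿ`. -/
def Kalman {n m : ℕ} (A : Matrix (Fin n) (Fin n) ℝ) (B : Matrix (Fin n) (Fin m) ℝ) : Prop :=
  Submodule.span ℝ (⋃ k ∈ Finset.range n, Set.range (A ^ k * B).mulVec) = ⊤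

open scoped Matrix.Norms.Operator
open NormedSpace

theorem intervalIntegral.integral_integral_swap_triangle {E : Type*} [NormedAddCommGroup E]
    [NormedSpace ℝ E] {f : ℝ → ℝ → E} {a b : ℝ} (hab : a ≤ b)
    (hf : IntegrableOn (Function.uncurry f) (Ioc a b ×ˢ Ioc a b)) :
    ∫ s in a..b, ∫ r in a..s, f s r = ∫ r in a..b, ∫ s in r..b, f s r := by
  set μ := volume.restrict (Ioc a b)
  set F : ℝ × ℝ → E := {q | q.2 ≤ q.1}.indicator (Function.uncurry f)
  have hF : Integrable F (μ.prod μ) := by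
    rw [Measure.prod_restrict, ← Measure.volume_eq_prod]
    exact hf.integrable.indicator (measurableSet_le measurable_snd measurable_fst)
  have inner_left : ∀ s ∈ Ioc a b, ∫ r in a..s, f s r = ∫ r, F (s, r) ∂μ := by
    intro s hs
    have hFs : (fun r => F (s, r)) = (Iic s).indicator (f s) := by
      ext r; simp [F, indicator_apply]
    rw [hFs, MeasureTheory.integral_indicator measurableSet_Iic,
      Measure.restrict_restrict measurableSet_Iic, Iic_inter_Ioc_of_le hs.2,
      intervalIntegral.integral_of_le hs.1.le]
  have inner_right : ∀ r ∈ Ioc a b, ∫ s in r..b, f s r = ∫ s, F (s, r) ∂μ := by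
    intro r hr
    have hFr : (fun s => F (s, r)) = (Ici r).indicator (fun s => f s r) := by
      ext s; simp [F, indicator_apply]
    have hIcc : Ici r ∩ Ioc a b = Icc r b := by
      ext s; simp only [mem_inter_iff, mem_Ici, mem_Ioc, mem_Icc]
      exact ⟨fun h => ⟨h.1, h.2.2⟩, fun h => ⟨h.1, hr.1.trans_le h.1, h.2⟩⟩
    rw [hFr, MeasureTheory.integral_indicator measurableSet_Ici,
      Measure.restrict_restrict measurableSet_Ici, hIcc, intervalIntegral.integral_of_le hr.2,
      integral_Icc_eq_integral_Ioc]
  rw [intervalIntegral.integral_of_le hab, intervalIntegral.integral_of_le hab,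
    setIntegral_congr_fun measurableSet_Ioc inner_left,
    setIntegral_congr_fun measurableSet_Ioc inner_right]
  exact integral_integral_swap hF

section MulVec

variable {m n : Type*} [Fintype m] [Fintype n]

theorem Continuous.exists_norm_mulVec_le {X : Type*} [TopologicalSpace X] {M : X → Matrix m n ℝ}
    (hM : Continuous M) {K : Set X} (hK : IsCompact K) :
    ∃ C, 0 ≤ C ∧ ∀ x ∈ K, ∀ v, ‖M x *ᵥ v‖ ≤ C * ‖v‖ := by
  obtain ⟨C, hC⟩ := hK.exists_bound_of_continuousOn hM.continuousOn
  exact ⟨max C 0, le_max_right _ _, fun x hx v => (linfty_opNorm_mulVec _ _).trans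
    (mul_le_mul_of_nonneg_right ((hC x hx).trans (le_max_left _ _)) (norm_nonneg _))⟩

theorem IntervalIntegrable.continuous_mulVec {M : ℝ → Matrix m n ℝ} {g : ℝ → n → ℝ}
    {a b : ℝ} (hg : IntervalIntegrable g volume a b) (hM : Continuous M) :
    IntervalIntegrable (fun x => M x *ᵥ g x) volume a b := by
  rw [intervalIntegrable_iff] at hg ⊢
  obtain ⟨C, -, hC⟩ := hM.exists_norm_mulVec_le isCompact_uIcc
  refine (hg.norm.const_mul C).mono' ?_ ?_
  · exact Continuous.comp_aestronglyMeasurable₂ (g := fun x v => M x *ᵥ v)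
      ((hM.comp continuous_fst).matrix_mulVec continuous_snd) aestronglyMeasurable_id hg.1
  · exact ae_restrict_of_forall_mem measurableSet_uIoc fun x hx => hC x (uIoc_subset_uIcc hx) _

theorem Matrix.mulVec_intervalIntegral (M : Matrix m n ℝ) {g : ℝ → n → ℝ} {a b : ℝ}
    (hg : IntervalIntegrable g volume a b) :
    M *ᵥ ∫ x in a..b, g x = ∫ x in a..b, M *ᵥ g x :=
  ((mulVecLin M).toContinuousLinearMap.intervalIntegral_comp_comm hg).symm

theorem HasDerivAt.mulVec_const {N : ℝ → Matrix m n ℝ} {N' : Matrix m n ℝ} {s : ℝ}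
    (hN : HasDerivAt N N' s) (v : n → ℝ) : HasDerivAt (fun σ => N σ *ᵥ v) (N' *ᵥ v) s :=
  ((mulVecBilin ℝ ℝ).flip v).toContinuousLinearMap.hasFDerivAt.comp_hasDerivAt (f := N) s hN

theorem intervalIntegral.integral_deriv_mulVec_primitive {N P : ℝ → Matrix m n ℝ}
    {g : ℝ → n → ℝ} {a b : ℝ} (hab : a ≤ b) (hN : ∀ s, HasDerivAt N (P s) s)
    (hP : Continuous P) (hg : IntervalIntegrable g volume a b) :
    ∫ s in a..b, P s *ᵥ ∫ r in a..s, g r =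
      N b *ᵥ (∫ r in a..b, g r) - ∫ r in a..b, N r *ᵥ g r := by
  have hN_cont : Continuous N := continuous_iff_continuousAt.2 fun s => (hN s).continuousAt
  have hg_sub : ∀ s ∈ uIcc a b, IntervalIntegrable g volume a s := fun s hs =>
    hg.mono_set (uIcc_subset_uIcc_left hs)
  have hswap : IntegrableOn (Function.uncurry fun s r => P s *ᵥ g r) (Ioc a b ×ˢ Ioc a b) := by
    obtain ⟨C, -, hC⟩ := hP.exists_norm_mulVec_le isCompact_uIcc
    have hg' : IntegrableOn g (Ioc a b) :=
      (intervalIntegrable_iff_integrableOn_Ioc_of_le hab).1 hg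
    rw [IntegrableOn, Measure.volume_eq_prod, ← Measure.prod_restrict]
    refine ((hg'.norm.const_mul C).comp_snd _).mono' ?_ ?_
    · exact Continuous.comp_aestronglyMeasurable₂ (g := fun s v => P s *ᵥ v)
        ((hP.comp continuous_fst).matrix_mulVec continuous_snd)
        measurable_fst.aestronglyMeasurable hg'.1.comp_snd
    · rw [Measure.prod_restrict]
      exact ae_restrict_of_forall_mem (measurableSet_Ioc.prod measurableSet_Ioc) fun q hq =>
        hC q.1 (Ioc_subset_Icc_self.trans Icc_subset_uIcc hq.1) _
  have hFTC : ∀ r ∈ uIcc a b, ∫ s in r..b, P s *ᵥ g r = N b *ᵥ g r - N r *ᵥ g r := fun r _ =>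
    intervalIntegral.integral_eq_sub_of_hasDerivAt (fun s _ => (hN s).mulVec_const (g r))
      ((hP.matrix_mulVec continuous_const).intervalIntegrable _ _)
  calc ∫ s in a..b, P s *ᵥ ∫ r in a..s, g r
      = ∫ s in a..b, ∫ r in a..s, P s *ᵥ g r :=
        intervalIntegral.integral_congr fun s hs => (P s).mulVec_intervalIntegral (hg_sub s hs)
    _ = ∫ r in a..b, ∫ s in r..b, P s *ᵥ g r :=
        intervalIntegral.integral_integral_swap_triangle hab hswap
    _ = ∫ r in a..b, (N b *ᵥ g r - N r *ᵥ g r) := intervalIntegral.integral_congr hFTC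
    _ = N b *ᵥ (∫ r in a..b, g r) - ∫ r in a..b, N r *ᵥ g r := by
        rw [intervalIntegral.integral_sub (hg.continuous_mulVec continuous_const)
          (hg.continuous_mulVec hN_cont), (N b).mulVec_intervalIntegral hg]

end MulVec

namespace Matrix

variable {ι : Type*} [Fintype ι] [DecidableEq ι]

theorem exp_sub_smul (X : Matrix ι ι ℝ) (a b : ℝ) :
    exp ((a - b) • X) = exp (a • X) * exp (-b • X) := by
  rw [sub_eq_add_neg, add_smul]
  exact exp_add_of_commute _ _ (((Commute.refl X).smul_left a).smul_right (-b))

theorem exp_smul_mul_exp_neg_smul (X : Matrix ι ι ℝ) (a : ℝ) :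
    exp (a • X) * exp (-a • X) = 1 := by
  rw [← exp_sub_smul, sub_self, zero_smul, exp_zero]

theorem hasDerivAt_exp_mul_exp (A Y : Matrix ι ι ℝ) (T s : ℝ) :
    HasDerivAt (fun σ : ℝ => exp ((T - σ) • A) * exp (σ • Y))
      (exp ((T - s) • A) * (Y - A) * exp (s • Y)) s := by
  have hA := (hasDerivAt_exp_smul_const A (T - s)).scomp s ((hasDerivAt_id' s).const_sub T)
  refine (hA.mul (hasDerivAt_exp_smul_const' Y s)).congr_deriv ?_
  simp only [Function.comp_apply]
  rw [neg_one_smul, neg_mul, mul_sub, sub_mul, mul_assoc, mul_assoc, mul_assoc]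
  exact neg_add_eq_sub _ _

theorem _root_.Continuous.matrix_exp_smul {f : ℝ → ℝ} (hf : Continuous f) (X : Matrix ι ι ℝ) :
    Continuous fun t => exp (f t • X) :=
  exp_continuous.comp (hf.smul continuous_const)

end Matrix

section ForcedResponse

variable {ι : Type*} [Fintype ι] [DecidableEq ι]

/-- The solution at time `t` of `ẋ = Y x + f`, `x 0 = 0`, by variation of constants. -/
noncomputable def forcedResponse (Y : Matrix ι ι ℝ) (f : ℝ → ι → ℝ) (t : ℝ) : ι → ℝ :=
  ∫ r in 0..t, exp ((t - r) • Y) *ᵥ f r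

theorem forcedResponse_eq_exp_smul_mulVec (Y : Matrix ι ι ℝ) {f : ℝ → ι → ℝ} {t : ℝ}
    (hf : IntervalIntegrable f volume 0 t) :
    forcedResponse Y f t = exp (t • Y) *ᵥ ∫ r in 0..t, exp (-r • Y) *ᵥ f r := by
  rw [forcedResponse, mulVec_intervalIntegral _
    (hf.continuous_mulVec (continuous_neg.matrix_exp_smul Y))]
  simp only [mulVec_mulVec, ← exp_sub_smul]

theorem continuous_forcedResponse (Y : Matrix ι ι ℝ) {f : ℝ → ι → ℝ}
    (hf : ∀ a b, IntervalIntegrable f volume a b) : Continuous (forcedResponse Y f) := by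
  have hx : forcedResponse Y f = fun t => exp (t • Y) *ᵥ ∫ r in 0..t, exp (-r • Y) *ᵥ f r :=
    funext fun t => forcedResponse_eq_exp_smul_mulVec Y (hf 0 t)
  rw [hx]
  exact (continuous_id.matrix_exp_smul Y).matrix_mulVec (intervalIntegral.continuous_primitive
    (fun a b => (hf a b).continuous_mulVec (continuous_neg.matrix_exp_smul Y)) 0)

theorem exists_norm_forcedResponse_le (Y : Matrix ι ι ℝ) :
    ∃ K, 0 ≤ K ∧ ∀ (f : ℝ → ι → ℝ) (R t : ℝ), (∀ r, ‖f r‖ ≤ R) → t ∈ Icc (0 : ℝ) 1 →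
      ‖forcedResponse Y f t‖ ≤ K * R * t := by
  obtain ⟨K, hK0, hK⟩ :=
    (continuous_id.matrix_exp_smul Y).exists_norm_mulVec_le (isCompact_Icc (a := 0) (b := 1))
  refine ⟨K, hK0, fun f R t hR ht => ?_⟩
  have hbound : ∀ r ∈ uIoc 0 t, ‖exp ((t - r) • Y) *ᵥ f r‖ ≤ K * R := fun r hr => by
    rw [uIoc_of_le ht.1] at hr
    exact (hK _ ⟨by linarith [hr.2], by linarith [hr.1, ht.2]⟩ _).trans
      (mul_le_mul_of_nonneg_left (hR r) hK0)
  simpa [forcedResponse, abs_of_nonneg ht.1] using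
    intervalIntegral.norm_integral_le_of_norm_le_const hbound

/-- Duhamel's formula: a solution of `ẋ = Y x + f` also solves `ẋ = A x + (f + (Y - A) x)`. -/
theorem forcedResponse_eq_forcedResponse_add (A Y : Matrix ι ι ℝ) {f : ℝ → ι → ℝ} {T : ℝ}
    (hT : 0 ≤ T) (hf : IntervalIntegrable f volume 0 T) :
    forcedResponse Y f T =
      forcedResponse A (fun s => f s + (Y - A) *ᵥ forcedResponse Y f s) T := by
  set g : ℝ → ι → ℝ := fun r => exp (-r • Y) *ᵥ f r
  have hg : IntervalIntegrable g volume 0 T :=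
    hf.continuous_mulVec (continuous_neg.matrix_exp_smul Y)
  set P : ℝ → Matrix ι ι ℝ := fun s => exp ((T - s) • A) * (Y - A) * exp (s • Y)
  have hA : Continuous fun s : ℝ => exp ((T - s) • A) :=
    (continuous_const.sub continuous_id).matrix_exp_smul A
  have hP : Continuous P := (hA.mul continuous_const).mul (continuous_id.matrix_exp_smul Y)
  have hG : ContinuousOn (fun s => ∫ r in 0..s, g r) (uIcc 0 T) :=
    intervalIntegral.continuousOn_primitive_interval' hg left_mem_uIcc
  calc forcedResponse Y f T
      = exp (T • Y) *ᵥ ∫ r in 0..T, g r := forcedResponse_eq_exp_smul_mulVec Y hf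
    _ = (∫ s in 0..T, exp ((T - s) • A) *ᵥ f s) + ∫ s in 0..T, P s *ᵥ ∫ r in 0..s, g r := by
        rw [intervalIntegral.integral_deriv_mulVec_primitive hT
          (hasDerivAt_exp_mul_exp A Y T) hP hg, sub_self, zero_smul, exp_zero, one_mul]
        have hNg : ∀ r, (exp ((T - r) • A) * exp (r • Y)) *ᵥ g r = exp ((T - r) • A) *ᵥ f r :=
          fun r => by rw [mulVec_mulVec, mul_assoc, exp_smul_mul_exp_neg_smul, mul_one]
        simp only [hNg, add_sub_cancel]
    _ = _ := by
        rw [forcedResponse, ← intervalIntegral.integral_add (hf.continuous_mulVec hA)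
          ((continuous_fst.matrix_mulVec continuous_snd).comp_continuousOn
            (hP.continuousOn.prodMk hG) |>.intervalIntegrable (u := fun s => P s *ᵥ _))]
        refine intervalIntegral.integral_congr fun s hs => ?_
        simp only [P, g]
        rw [forcedResponse_eq_exp_smul_mulVec Y (hf.mono_set (uIcc_subset_uIcc_left hs)),
          mulVec_add, mulVec_mulVec, mulVec_mulVec]

end ForcedResponse

section Control

variable {ι κ : Type*} [Fintype ι] [DecidableEq ι] [Fintype κ]

theorem IsSymConvexBody.zero_mem_interior {U : Set (κ → ℝ)} (hU : IsSymConvexBody U) :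
    (0 : κ → ℝ) ∈ interior U := by
  obtain ⟨-, hconv, ⟨x, hx⟩, hsymm⟩ := hU
  have hnx : -x ∈ interior U := by
    rw [hsymm]
    exact (Homeomorph.neg _).preimage_interior U ▸ by simpa using hx
  simpa using hconv.interior hx hnx (by norm_num : (0 : ℝ) ≤ 1 / 2)
    (by norm_num : (0 : ℝ) ≤ 1 / 2) (by norm_num)

theorem Convex.add_mem_one_add_smul {E : Type*} [NormedAddCommGroup E] [NormedSpace ℝ E]
    {U : Set E} (hU : Convex ℝ U) {ε t : ℝ} (ht : 0 < t) (hball : Metric.closedBall 0 ε ⊆ U)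
    {u b : E} (hu : u ∈ U) (hb : ‖b‖ ≤ t * ε) : u + b ∈ (1 + t) • U := by
  rw [hU.add_smul zero_le_one ht.le, one_smul]
  refine add_mem_add hu ⟨t⁻¹ • b, hball ?_, smul_inv_smul₀ ht.ne' b⟩
  rw [mem_closedBall_zero_iff, norm_smul, Real.norm_of_nonneg (inv_nonneg.2 ht.le)]
  exact (inv_mul_le_iff₀ ht).2 hb

theorem forcedResponse_feedback (A : Matrix ι ι ℝ) (B : Matrix ι κ ℝ) (C : Matrix κ ι ℝ)
    {u : ℝ → κ → ℝ} {T : ℝ} (hT : 0 ≤ T) (hu : IntervalIntegrable u volume 0 T) :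
    forcedResponse (A + B * C) (fun s => B *ᵥ u s) T =
      forcedResponse A
        (fun s => B *ᵥ (u s + C *ᵥ forcedResponse (A + B * C) (fun r => B *ᵥ u r) s)) T := by
  rw [forcedResponse_eq_forcedResponse_add A _ hT (hu.continuous_mulVec continuous_const),
    add_sub_cancel_left]
  simp only [mulVec_add, mulVec_mulVec]

theorem reachable_feedback_subset (A : Matrix ι ι ℝ) (B : Matrix ι κ ℝ) (C : Matrix κ ι ℝ)
    {U : Set (κ → ℝ)} (hU : IsSymConvexBody U) :
    ∃ c > 0, ∀ T, 0 < T → T ≤ 1 →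
      reachable (A + B * C) B U T ⊆ (1 + c * T) • reachable A B U T := by
  obtain ⟨ε, hε, hball⟩ :=
    Metric.nhds_basis_closedBall.mem_iff.1 (mem_interior_iff_mem_nhds.1 hU.zero_mem_interior)
  obtain ⟨R, hR0, hR⟩ := hU.1.isBounded.exists_pos_norm_le
  obtain ⟨K, hK0, hK⟩ := exists_norm_forcedResponse_le (A + B * C)
  set L := ‖C‖ * (K * (‖B‖ * R))
  have hL : 0 ≤ L := by positivity
  refine ⟨(L + 1) / ε, by positivity, fun T hT hT1 => ?_⟩
  rintro _ ⟨u, hu, huU, rfl⟩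
  set t := (L + 1) / ε * T
  have hu_int : ∀ a b, IntervalIntegrable u volume a b := fun a b =>
    intervalIntegrable_const.mono_fun' hu.aestronglyMeasurable (ae_of_all _ fun s => hR _ (huU s))
  set x := forcedResponse (A + B * C) fun s => B *ᵥ u s
  have hx : Continuous x :=
    continuous_forcedResponse _ fun a b => (hu_int a b).continuous_mulVec continuous_const
  have hCx : ∀ s ∈ Icc 0 T, ‖C *ᵥ x s‖ ≤ t * ε := fun s hs => calc
    ‖C *ᵥ x s‖ ≤ ‖C‖ * ‖x s‖ := linfty_opNorm_mulVec _ _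
    _ ≤ ‖C‖ * (K * (‖B‖ * R) * s) := by
        refine mul_le_mul_of_nonneg_left (hK _ _ s (fun r => ?_) ⟨hs.1, hs.2.trans hT1⟩)
          (norm_nonneg _)
        exact (linfty_opNorm_mulVec _ _).trans (by gcongr; exact hR _ (huU r))
    _ = L * s := by ring
    _ ≤ (L + 1) * T := by gcongr <;> linarith [hs.1, hs.2]
    _ = t * ε := by simp only [t]; field_simp
  set b := (Icc 0 T).indicator fun s => C *ᵥ x s
  have hb : ∀ s, u s + b s ∈ (1 + t) • U := fun s => by
    refine hU.2.1.add_mem_one_add_smul (by positivity) hball (huU s) ?_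
    by_cases hs : s ∈ Icc 0 T
    · simpa [b, hs] using hCx s hs
    · simp only [b, indicator_of_notMem hs, norm_zero]; positivity
  set v := fun s => (1 + t)⁻¹ • (u s + b s)
  have hbm : Measurable b :=
    (continuous_const.matrix_mulVec hx).measurable.indicator measurableSet_Icc
  have hv : Measurable v := by fun_prop
  refine ⟨forcedResponse A (fun s => B *ᵥ v s) T,
    ⟨v, hv, fun s => (mem_smul_set_iff_inv_smul_mem₀ (by positivity) _ _).1 (hb s), rfl⟩, ?_⟩
  show (1 + t) • forcedResponse A (fun s => B *ᵥ v s) T = x T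
  rw [show x T = _ from forcedResponse_feedback A B C hT.le (hu_int 0 T), forcedResponse,
    forcedResponse, ← intervalIntegral.integral_smul]
  refine intervalIntegral.integral_congr fun s hs => ?_
  rw [uIcc_of_le hT.le] at hs
  simp only [v, b, indicator_of_mem hs, mulVec_smul, smul_inv_smul₀ (by positivity : 1 + t ≠ 0)]
  rfl

end Control

theorem bmDist_le_log_add_log {ι : Type*} [Fintype ι] {Ω₁ Ω₂ : Set (ι → ℝ)} {t₁ t₂ : ℝ}
    (h₁ : 1 ≤ t₁) (h₂ : 1 ≤ t₂) (hΩ₂ : Ω₂ ⊆ t₁ • Ω₁) (hΩ₁ : Ω₁ ⊆ t₂ • Ω₂) :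
    bmDist Ω₁ Ω₂ ≤ Real.log t₁ + Real.log t₂ := by
  have hbdd : ∀ {Ω Ω' : Set (ι → ℝ)}, BddBelow {t : ℝ | 1 ≤ t ∧ Ω' ⊆ t • Ω} :=
    ⟨1, fun _ h => h.1⟩
  have hf₁ : bmFactor Ω₁ Ω₂ ≤ t₁ := csInf_le hbdd ⟨h₁, hΩ₂⟩
  have hf₂ : bmFactor Ω₂ Ω₁ ≤ t₂ := csInf_le hbdd ⟨h₂, hΩ₁⟩
  have hf₁' : 1 ≤ bmFactor Ω₁ Ω₂ := le_csInf ⟨t₁, h₁, hΩ₂⟩ fun _ h => h.1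
  have hf₂' : 1 ≤ bmFactor Ω₂ Ω₁ := le_csInf ⟨t₂, h₂, hΩ₁⟩ fun _ h => h.1
  rw [← Real.log_mul (by positivity) (by positivity)]
  exact Real.log_le_log (by positivity) (mul_le_mul hf₁ hf₂ (by positivity) (by positivity))

/-- **Adding a linear feedback perturbs the reachable set by `O(T)`.**
If `D(T)` and `D̃(T)` are the reachable sets of `ẋ = Ax + Bu` and of the feedback
system `ẋ = (A + BC)x + Bu` (`u ∈ U`, a centrally symmetric convex body), then
`ρ(D(T), D̃(T)) = O(T)` as `T → 0`. -/
theorem feedback_bmDist_bigO {n m : ℕ}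
    (A : Matrix (Fin n) (Fin n) ℝ) (B : Matrix (Fin n) (Fin m) ℝ)
    (C : Matrix (Fin m) (Fin n) ℝ)
    (U : Set (Fin m → ℝ)) (hU : IsSymConvexBody U) :
    ∃ c > (0:ℝ), ∃ T₀ > (0:ℝ), ∀ T : ℝ, 0 < T → T < T₀ →
      bmDist (reachable A B U T) (reachable (A + B * C) B U T) ≤ c * T := by
  obtain ⟨c₁, hc₁, h₁⟩ := reachable_feedback_subset A B C hU
  obtain ⟨c₂, hc₂, h₂⟩ := reachable_feedback_subset (A + B * C) B (-C) hU
  rw [Matrix.mul_neg, add_neg_cancel_right] at h₂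
  refine ⟨c₁ + c₂, by positivity, 1, one_pos, fun T hT hT1 => ?_⟩
  have log_le (c : ℝ) (hc : 0 < c) : Real.log (1 + c * T) ≤ c * T := by
    linarith [Real.log_le_sub_one_of_pos (x := 1 + c * T) (by positivity)]
  calc bmDist (reachable A B U T) (reachable (A + B * C) B U T)
      ≤ Real.log (1 + c₁ * T) + Real.log (1 + c₂ * T) :=
        bmDist_le_log_add_log (by nlinarith) (by nlinarith) (h₁ T hT hT1.le) (h₂ T hT hT1.le)
    _ ≤ (c₁ + c₂) * T := by linarith [log_le c₁ hc₁, log_le c₂ hc₂]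
end

section
/- The space of shapes of centrally symmetric convex bodies in ℝⁿ, i.e., the quotient of the space of centrally symmetric convex bodies by the action of GL(n, ℝ), equipped with the Banach–Mazur factormetric ρ(Sh Ω₁, Sh Ω₂) = inf over invertible g of ρ(gΩ₁, Ω₂), is a compact metric space. In particular, the factormetric is symmetric, satisfies the triangle inequality, vanishes exactly when the two bodies lie in the same GL(n, ℝ)-orbit, and every sequence of shapes has a convergent subsequence. -/
/-!
The factormetric is an infimum over `GL(n)` of a quantity invariant under simultaneous linear
maps, so its symmetry and triangle inequality come from those of `ρ`. The rest is compactness.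
If `ρ(gₖΩ₁, Ω₂) → 0`, the inclusions `gₖΩ₁ ⊆ bₖΩ₂` and `gₖ⁻¹Ω₂ ⊆ aₖΩ₁` with `aₖ, bₖ → 1` bound
the entries of `gₖ` and `gₖ⁻¹`, so a subsequence converges to mutually inverse limits `G`, `H`
with `GΩ₁ ⊆ Ω₂` and `HΩ₂ ⊆ Ω₁`, i.e. `GΩ₁ = Ω₂`. For a sequence of bodies, choose in each body
`n` points spanning a parallelepiped of maximal volume: by Cramer's rule every point of the
body has coordinates of size at most `1` in that basis, while by symmetry and convexity the body
contains every combination with coefficients summing in absolute value to at most `1`. This puts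
each body, up to `GL(n)`, between the sup-norm balls of radii `1/(n+1)` and `1`. Blaschke
selection gives a Hausdorff-convergent subsequence, its limit is again a symmetric convex body
containing the small ball, and Hausdorff distance `d` bounds `ρ` by `2 log (1 + (n+1) d)`.
-/

open MeasureTheory Matrix Set Filter Topology Pointwise

open Metric Bornology

section Bodies

variable {ι : Type*} [Fintype ι] {Ω : Set (ι → ℝ)}

namespace IsSymConvexBody

lemma isBounded (h : IsSymConvexBody Ω) : IsBounded Ω := h.1.isBounded

lemma neg_mem (h : IsSymConvexBody Ω) {x : ι → ℝ} (hx : x ∈ Ω) : -x ∈ Ω := by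
  rw [h.2.2.2]
  exact Set.neg_mem_neg.2 hx

/-- The midpoint of an interior point `x` and of `-x` is `0`. -/
lemma mem_nhds_zero (h : IsSymConvexBody Ω) : Ω ∈ 𝓝 (0 : ι → ℝ) := by
  obtain ⟨-, hconv, ⟨x, hx⟩, hsym⟩ := h
  have hx' : -x ∈ interior Ω := by
    rw [mem_interior_iff_mem_nhds] at hx ⊢
    rw [hsym]
    exact continuous_neg.continuousAt.preimage_mem_nhds (by rwa [neg_neg])
  have h0 := hconv.interior hx hx' (by norm_num : (0 : ℝ) ≤ 1 / 2)
    (by norm_num : (0 : ℝ) ≤ 1 / 2) (by norm_num)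
  rw [smul_neg, add_neg_cancel] at h0
  exact mem_interior_iff_mem_nhds.1 h0

lemma exists_closedBall_subset (h : IsSymConvexBody Ω) : ∃ r, 0 < r ∧ closedBall 0 r ⊆ Ω :=
  nhds_basis_closedBall.mem_iff.1 h.mem_nhds_zero

lemma image [DecidableEq ι] (h : IsSymConvexBody Ω) {g : Matrix ι ι ℝ} (hg : IsUnit g) :
    IsSymConvexBody (g.mulVec '' Ω) := by
  obtain ⟨hc, hconv, ⟨x, hx⟩, hsym⟩ := h
  have hopen : IsOpenMap g.mulVec := by
    rw [← coe_mulVecLin]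
    exact LinearMap.isOpenMap_of_finiteDimensional _ (mulVec_surjective_iff_isUnit.2 hg)
  refine ⟨hc.image (by fun_prop), hconv.linear_image g.mulVecLin, ⟨g *ᵥ x, ?_⟩, ?_⟩
  · exact hopen.image_interior_subset Ω (mem_image_of_mem _ hx)
  · rw [← coe_mulVecLin, ← Set.image_neg, ← hsym]

end IsSymConvexBody

end Bodies

section BanachMazur

variable {ι : Type*} [Fintype ι] {A B C : Set (ι → ℝ)}

lemma bmFactor_le {t : ℝ} (ht : 1 ≤ t) (h : B ⊆ t • A) : bmFactor A B ≤ t :=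
  csInf_le ⟨1, fun _ hs => hs.1⟩ ⟨ht, h⟩

lemma one_le_bmFactor_of_subset_smul {t : ℝ} (ht : 1 ≤ t) (h : B ⊆ t • A) :
    1 ≤ bmFactor A B :=
  le_csInf ⟨t, ht, h⟩ fun _ hs => hs.1

lemma exists_subset_smul (hA : A ∈ 𝓝 0) (hB : IsBounded B) : ∃ t : ℝ, 1 ≤ t ∧ B ⊆ t • A := by
  obtain ⟨r, hr, hrA⟩ := nhds_basis_closedBall.mem_iff.1 hA
  obtain ⟨R, hRB⟩ := hB.subset_closedBall 0
  refine ⟨max 1 (R / r), le_max_left _ _, hRB.trans ?_⟩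
  have ht : 0 < max 1 (R / r) := lt_max_of_lt_left one_pos
  calc closedBall (0 : ι → ℝ) R ⊆ closedBall 0 (max 1 (R / r) * r) :=
        closedBall_subset_closedBall ((div_le_iff₀ hr).1 (le_max_right _ _))
    _ = max 1 (R / r) • closedBall 0 r := by
        rw [smul_closedBall _ _ hr.le, smul_zero, Real.norm_of_nonneg ht.le]
    _ ⊆ max 1 (R / r) • A := smul_set_mono hrA

lemma one_le_bmFactor (hA : A ∈ 𝓝 0) (hB : IsBounded B) : 1 ≤ bmFactor A B :=
  let ⟨_, ht, h⟩ := exists_subset_smul hA hB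
  one_le_bmFactor_of_subset_smul ht h

lemma subset_bmFactor_smul (hAc : IsClosed A) (hA : A ∈ 𝓝 0) (hB : IsBounded B) :
    B ⊆ bmFactor A B • A := by
  intro x hx
  have ht : bmFactor A B ≠ 0 := (zero_lt_one.trans_le (one_le_bmFactor hA hB)).ne'
  have hcont : ContinuousWithinAt (fun t : ℝ => t⁻¹ • x) {t | 1 ≤ t ∧ B ⊆ t • A}
      (bmFactor A B) :=
    ((continuousAt_inv₀ ht).smul continuousAt_const).continuousWithinAt
  have hmaps : MapsTo (fun t : ℝ => t⁻¹ • x) {t | 1 ≤ t ∧ B ⊆ t • A} A := fun t hs =>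
    (mem_smul_set_iff_inv_smul_mem₀ (zero_lt_one.trans_le hs.1).ne' _ _).1 (hs.2 hx)
  have hmem := hcont.mem_closure
    (csInf_mem_closure (exists_subset_smul hA hB) ⟨1, fun _ hs => hs.1⟩) hmaps
  rw [hAc.closure_eq] at hmem
  exact (mem_smul_set_iff_inv_smul_mem₀ ht _ _).2 hmem

lemma bmFactor_self (A : Set (ι → ℝ)) : bmFactor A A = 1 :=
  IsLeast.csInf_eq ⟨⟨le_rfl, by rw [one_smul]⟩, fun _ hs => hs.1⟩

lemma bmDist_comm (A B : Set (ι → ℝ)) : bmDist A B = bmDist B A := by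
  rw [bmDist, bmDist, mul_comm]

lemma bmDist_self (A : Set (ι → ℝ)) : bmDist A A = 0 := by
  rw [bmDist, bmFactor_self, mul_one, Real.log_one]

lemma bmDist_le_log {s t : ℝ} (hs : 1 ≤ s) (ht : 1 ≤ t) (hAB : B ⊆ s • A) (hBA : A ⊆ t • B) :
    bmDist A B ≤ Real.log (s * t) := by
  have h₁ := one_le_bmFactor_of_subset_smul hs hAB
  have h₂ := one_le_bmFactor_of_subset_smul ht hBA
  exact Real.log_le_log (by positivity)
    (mul_le_mul (bmFactor_le hs hAB) (bmFactor_le ht hBA) (by positivity) (by positivity))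

namespace IsSymConvexBody

lemma one_le_bmFactor (hA : IsSymConvexBody A) (hB : IsSymConvexBody B) : 1 ≤ bmFactor A B :=
  _root_.one_le_bmFactor hA.mem_nhds_zero hB.isBounded

lemma subset_bmFactor_smul (hA : IsSymConvexBody A) (hB : IsSymConvexBody B) :
    B ⊆ bmFactor A B • A :=
  _root_.subset_bmFactor_smul hA.1.isClosed hA.mem_nhds_zero hB.isBounded

lemma exp_bmDist (hA : IsSymConvexBody A) (hB : IsSymConvexBody B) :
    Real.exp (bmDist A B) = bmFactor A B * bmFactor B A :=
  Real.exp_log (by nlinarith [hA.one_le_bmFactor hB, hB.one_le_bmFactor hA])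

lemma bmDist_nonneg (hA : IsSymConvexBody A) (hB : IsSymConvexBody B) : 0 ≤ bmDist A B :=
  Real.log_nonneg (by nlinarith [hA.one_le_bmFactor hB, hB.one_le_bmFactor hA])

lemma bmDist_triangle (hA : IsSymConvexBody A) (hB : IsSymConvexBody B)
    (hC : IsSymConvexBody C) : bmDist A C ≤ bmDist A B + bmDist B C := by
  have hAB := hA.one_le_bmFactor hB
  have hBA := hB.one_le_bmFactor hA
  have hBC := hB.one_le_bmFactor hC
  have hCB := hC.one_le_bmFactor hB
  calc bmDist A C
      ≤ Real.log ((bmFactor B C * bmFactor A B) * (bmFactor B A * bmFactor C B)) := by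
        refine bmDist_le_log (one_le_mul_of_one_le_of_one_le hBC hAB)
          (one_le_mul_of_one_le_of_one_le hBA hCB) ?_ ?_
        · calc C ⊆ bmFactor B C • B := hB.subset_bmFactor_smul hC
            _ ⊆ bmFactor B C • bmFactor A B • A := smul_set_mono (hA.subset_bmFactor_smul hB)
            _ = (bmFactor B C * bmFactor A B) • A := smul_smul _ _ _
        · calc A ⊆ bmFactor B A • B := hB.subset_bmFactor_smul hA
            _ ⊆ bmFactor B A • bmFactor C B • C := smul_set_mono (hC.subset_bmFactor_smul hB)
            _ = (bmFactor B A * bmFactor C B) • C := smul_smul _ _ _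
    _ = bmDist A B + bmDist B C := by
        rw [bmDist, bmDist, ← Real.log_mul (by positivity) (by positivity)]
        congr 1
        ring

end IsSymConvexBody

lemma tendsto_bmFactor_of_tendsto_bmDist {A B : ℕ → Set (ι → ℝ)}
    (hA : ∀ k, IsSymConvexBody (A k)) (hB : ∀ k, IsSymConvexBody (B k))
    (h : Tendsto (fun k => bmDist (A k) (B k)) atTop (𝓝 0)) :
    Tendsto (fun k => bmFactor (A k) (B k)) atTop (𝓝 1) := by
  refine tendsto_of_tendsto_of_tendsto_of_le_of_le tendsto_const_nhds
    (by simpa using (Real.continuous_exp.tendsto 0).comp h)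
    (fun k => (hA k).one_le_bmFactor (hB k)) fun k => ?_
  simp only [Function.comp_apply, (hA k).exp_bmDist (hB k)]
  exact le_mul_of_one_le_right (by linarith [(hA k).one_le_bmFactor (hB k)])
    ((hB k).one_le_bmFactor (hA k))

end BanachMazur

section Shape

variable {ι : Type*} [Fintype ι] {Ω₁ Ω₂ Ω₃ : Set (ι → ℝ)}

lemma mul_mulVec_image (g h : Matrix ι ι ℝ) (A : Set (ι → ℝ)) :
    (g * h).mulVec '' A = g.mulVec '' (h.mulVec '' A) := by
  simp only [image_image, mulVec_mulVec]

lemma mulVec_image_smul (g : Matrix ι ι ℝ) (c : ℝ) (A : Set (ι → ℝ)) :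
    g.mulVec '' (c • A) = c • g.mulVec '' A := by
  rw [← coe_mulVecLin, image_smul_set]

variable [DecidableEq ι]

lemma inv_mulVec_image_mulVec_image {g : Matrix ι ι ℝ} (hg : IsUnit g) (A : Set (ι → ℝ)) :
    g⁻¹.mulVec '' (g.mulVec '' A) = A := by
  rw [← mul_mulVec_image, nonsing_inv_mul _ ((isUnit_iff_isUnit_det g).1 hg)]
  simp

lemma bmFactor_mulVec_image {g : Matrix ι ι ℝ} (hg : IsUnit g) (A B : Set (ι → ℝ)) :
    bmFactor (g.mulVec '' A) (g.mulVec '' B) = bmFactor A B := by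
  simp only [bmFactor, ← mulVec_image_smul,
    image_subset_image_iff (mulVec_injective_iff_isUnit.2 hg)]

lemma bmDist_mulVec_image {g : Matrix ι ι ℝ} (hg : IsUnit g) (A B : Set (ι → ℝ)) :
    bmDist (g.mulVec '' A) (g.mulVec '' B) = bmDist A B := by
  rw [bmDist, bmDist, bmFactor_mulVec_image hg, bmFactor_mulVec_image hg]

lemma bmDist_mulVec_image_left {g : Matrix ι ι ℝ} (hg : IsUnit g) (A B : Set (ι → ℝ)) :
    bmDist (g.mulVec '' A) B = bmDist A (g⁻¹.mulVec '' B) := by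
  rw [← bmDist_mulVec_image (isUnit_nonsing_inv_iff.2 hg), inv_mulVec_image_mulVec_image hg]

lemma le_shapeDist {c : ℝ} (h : ∀ g : Matrix ι ι ℝ, IsUnit g → c ≤ bmDist (g.mulVec '' Ω₁) Ω₂) :
    c ≤ shapeDist Ω₁ Ω₂ :=
  le_csInf ⟨_, 1, isUnit_one, rfl⟩ fun _ ⟨g, hg, hr⟩ => hr ▸ h g hg

lemma bddBelow_bmDist_mulVec_image {Ω₁ Ω₂ : Set (ι → ℝ)} (h₁ : IsSymConvexBody Ω₁)
    (h₂ : IsSymConvexBody Ω₂) :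
    BddBelow {r | ∃ g : Matrix ι ι ℝ, IsUnit g ∧ r = bmDist (g.mulVec '' Ω₁) Ω₂} :=
  ⟨0, fun _ ⟨_, hg, hr⟩ => hr ▸ (h₁.image hg).bmDist_nonneg h₂⟩

lemma shapeDist_le (h₁ : IsSymConvexBody Ω₁) (h₂ : IsSymConvexBody Ω₂) {g : Matrix ι ι ℝ}
    (hg : IsUnit g) : shapeDist Ω₁ Ω₂ ≤ bmDist (g.mulVec '' Ω₁) Ω₂ :=
  csInf_le (bddBelow_bmDist_mulVec_image h₁ h₂) ⟨g, hg, rfl⟩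

lemma shapeDist_nonneg (h₁ : IsSymConvexBody Ω₁) (h₂ : IsSymConvexBody Ω₂) :
    0 ≤ shapeDist Ω₁ Ω₂ :=
  le_shapeDist fun _ hg => (h₁.image hg).bmDist_nonneg h₂

lemma shapeDist_comm (Ω₁ Ω₂ : Set (ι → ℝ)) : shapeDist Ω₁ Ω₂ = shapeDist Ω₂ Ω₁ := by
  have key : ∀ A B : Set (ι → ℝ),
      {r | ∃ g : Matrix ι ι ℝ, IsUnit g ∧ r = bmDist (g.mulVec '' A) B} ⊆
        {r | ∃ g : Matrix ι ι ℝ, IsUnit g ∧ r = bmDist (g.mulVec '' B) A} := by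
    rintro A B _ ⟨g, hg, rfl⟩
    exact ⟨g⁻¹, isUnit_nonsing_inv_iff.2 hg, by rw [bmDist_mulVec_image_left hg, bmDist_comm]⟩
  rw [shapeDist, shapeDist, (key Ω₁ Ω₂).antisymm (key Ω₂ Ω₁)]

lemma shapeDist_triangle (h₁ : IsSymConvexBody Ω₁) (h₂ : IsSymConvexBody Ω₂)
    (h₃ : IsSymConvexBody Ω₃) : shapeDist Ω₁ Ω₃ ≤ shapeDist Ω₁ Ω₂ + shapeDist Ω₂ Ω₃ := by
  have key : ∀ g₁ g₂ : Matrix ι ι ℝ, IsUnit g₁ → IsUnit g₂ →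
      shapeDist Ω₁ Ω₃ ≤ bmDist (g₁.mulVec '' Ω₁) Ω₂ + bmDist (g₂.mulVec '' Ω₂) Ω₃ := by
    intro g₁ g₂ hg₁ hg₂
    calc shapeDist Ω₁ Ω₃ ≤ bmDist (g₂.mulVec '' (g₁.mulVec '' Ω₁)) Ω₃ := by
          rw [← mul_mulVec_image]; exact shapeDist_le h₁ h₃ (hg₂.mul hg₁)
      _ ≤ bmDist (g₂.mulVec '' (g₁.mulVec '' Ω₁)) (g₂.mulVec '' Ω₂) +
          bmDist (g₂.mulVec '' Ω₂) Ω₃ :=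
        ((h₁.image hg₁).image hg₂).bmDist_triangle (h₂.image hg₂) h₃
      _ = bmDist (g₁.mulVec '' Ω₁) Ω₂ + bmDist (g₂.mulVec '' Ω₂) Ω₃ := by
        rw [bmDist_mulVec_image hg₂]
  have h₂₃ : ∀ g₁ : Matrix ι ι ℝ, IsUnit g₁ →
      shapeDist Ω₁ Ω₃ - bmDist (g₁.mulVec '' Ω₁) Ω₂ ≤ shapeDist Ω₂ Ω₃ :=
    fun g₁ hg₁ => le_shapeDist fun g₂ hg₂ => by linarith [key g₁ g₂ hg₁ hg₂]
  have h₁₂ : shapeDist Ω₁ Ω₃ - shapeDist Ω₂ Ω₃ ≤ shapeDist Ω₁ Ω₂ :=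
    le_shapeDist fun g₁ hg₁ => by linarith [h₂₃ g₁ hg₁]
  linarith

lemma shapeDist_mulVec_image_self (h : IsSymConvexBody Ω₁) {g : Matrix ι ι ℝ} (hg : IsUnit g) :
    shapeDist Ω₁ (g.mulVec '' Ω₁) = 0 :=
  le_antisymm ((shapeDist_le h (h.image hg) hg).trans_eq (bmDist_self _))
    (shapeDist_nonneg h (h.image hg))

end Shape

section Orbit

lemma isCompact_setOf_abs_apply_le {m n : Type*} (C : ℝ) :
    IsCompact {g : Matrix m n ℝ | ∀ i j, |g i j| ≤ C} := by
  have h : {g : Matrix m n ℝ | ∀ i j, |g i j| ≤ C} =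
      univ.pi fun _ => univ.pi fun _ => Icc (-C) C := by
    ext g
    exact ⟨fun h i _ j _ => abs_le.1 (h i j), fun h i j => abs_le.2 (h i trivial j trivial)⟩
  rw [h]
  exact isCompact_univ_pi fun _ => isCompact_univ_pi fun _ => isCompact_Icc

variable {ι : Type*} [Fintype ι]

lemma mulVec_image_subset_of_tendsto {m : Type*} {A : Set (ι → ℝ)} {B : Set (m → ℝ)}
    (hB : IsClosed B) {g : ℕ → Matrix m ι ℝ} {G : Matrix m ι ℝ} (hg : Tendsto g atTop (𝓝 G))
    {c : ℕ → ℝ} {c₀ : ℝ} (hc : Tendsto c atTop (𝓝 c₀)) (hc₀ : c₀ ≠ 0)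
    (h : ∀ k, (g k).mulVec '' A ⊆ c k • B) : G.mulVec '' A ⊆ c₀ • B := by
  rintro _ ⟨x, hx, rfl⟩
  have hlim : Tendsto (fun k => (c k)⁻¹ • (g k *ᵥ x)) atTop (𝓝 (c₀⁻¹ • (G *ᵥ x))) :=
    (hc.inv₀ hc₀).smul (((continuous_id.matrix_mulVec continuous_const).tendsto G).comp hg)
  refine (mem_smul_set_iff_inv_smul_mem₀ hc₀ _ _).2 (hB.mem_of_tendsto hlim ?_)
  filter_upwards [hc.eventually_ne hc₀] with k hk
  exact (mem_smul_set_iff_inv_smul_mem₀ hk _ _).1 (h k (mem_image_of_mem _ hx))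

variable [DecidableEq ι]

lemma abs_apply_le_of_mulVec_image_subset {m : Type*} [Fintype m] {g : Matrix m ι ℝ} {r R : ℝ}
    (hr : 0 < r) (h : g.mulVec '' closedBall 0 r ⊆ closedBall 0 R) (i : m) (j : ι) :
    |g i j| ≤ R / r := by
  have hmem : Pi.single j r ∈ closedBall (0 : ι → ℝ) r := by
    rw [mem_closedBall_zero_iff, Pi.norm_single, Real.norm_of_nonneg hr.le]
  have hR := mem_closedBall_zero_iff.1 (h (mem_image_of_mem _ hmem))
  rw [le_div_iff₀ hr, ← abs_of_pos hr, ← abs_mul]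
  calc |g i j * r| = ‖(g *ᵥ Pi.single j r) i‖ := by simp [mulVec_single]
    _ ≤ R := (norm_le_pi_norm _ i).trans hR

lemma exists_eventually_abs_apply_le {m : Type*} [Fintype m] {A : Set (ι → ℝ)}
    {B : Set (m → ℝ)} (hA : A ∈ 𝓝 0) (hB : IsBounded B) {g : ℕ → Matrix m ι ℝ} {c : ℕ → ℝ}
    (hc : Tendsto c atTop (𝓝 1)) (h : ∀ k, (g k).mulVec '' A ⊆ c k • B) :
    ∃ C, ∀ᶠ k in atTop, ∀ i j, |g k i j| ≤ C := by
  obtain ⟨r, hr, hrA⟩ := nhds_basis_closedBall.mem_iff.1 hA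
  obtain ⟨R, hR, hRB⟩ := hB.subset_closedBall_lt 0 0
  refine ⟨2 * R / r, ?_⟩
  filter_upwards [hc.eventually (Ioo_mem_nhds zero_lt_one one_lt_two)] with k hk i j
  refine abs_apply_le_of_mulVec_image_subset hr ?_ i j
  calc (g k).mulVec '' closedBall 0 r ⊆ c k • B := (image_mono hrA).trans (h k)
    _ ⊆ c k • closedBall 0 R := smul_set_mono hRB
    _ = closedBall 0 (c k * R) := by
        rw [smul_closedBall' hk.1.ne', smul_zero, Real.norm_of_nonneg hk.1.le]
    _ ⊆ closedBall 0 (2 * R) := closedBall_subset_closedBall (by nlinarith [hk.2])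

lemma exists_isUnit_mulVec_image_eq_of_tendsto {Ω₁ Ω₂ : Set (ι → ℝ)}
    (h₁ : IsSymConvexBody Ω₁) (h₂ : IsSymConvexBody Ω₂) {g h : ℕ → Matrix ι ι ℝ}
    (hgh : ∀ k, g k * h k = 1) {a b : ℕ → ℝ} (ha : Tendsto a atTop (𝓝 1))
    (hb : Tendsto b atTop (𝓝 1)) (hg : ∀ k, (g k).mulVec '' Ω₁ ⊆ b k • Ω₂)
    (hh : ∀ k, (h k).mulVec '' Ω₂ ⊆ a k • Ω₁) :
    ∃ G : Matrix ι ι ℝ, IsUnit G ∧ Ω₂ = G.mulVec '' Ω₁ := by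
  obtain ⟨C₁, hC₁⟩ := exists_eventually_abs_apply_le h₁.mem_nhds_zero h₂.isBounded hb hg
  obtain ⟨C₂, hC₂⟩ := exists_eventually_abs_apply_le h₂.mem_nhds_zero h₁.isBounded ha hh
  -- the instance is not found through the `Matrix` type synonym
  have : FirstCountableTopology (Matrix ι ι ℝ) :=
    inferInstanceAs (FirstCountableTopology (ι → ι → ℝ))
  obtain ⟨⟨G, H⟩, -, φ, hφ, hlim⟩ := ((isCompact_setOf_abs_apply_le _).prod
    (isCompact_setOf_abs_apply_le _)).tendsto_subseq' (x := fun k => (g k, h k))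
    (hC₁.and hC₂).frequently
  have hG : Tendsto (g ∘ φ) atTop (𝓝 G) := hlim.fst_nhds
  have hH : Tendsto (h ∘ φ) atTop (𝓝 H) := hlim.snd_nhds
  have hGH : G * H = 1 := by
    have h1 := hG.mul hH
    simp only [Function.comp_apply, hgh] at h1
    exact tendsto_nhds_unique h1 tendsto_const_nhds
  have hGΩ : G.mulVec '' Ω₁ ⊆ Ω₂ := by
    simpa using mulVec_image_subset_of_tendsto h₂.1.isClosed hG (hb.comp hφ.tendsto_atTop)
      one_ne_zero fun k => hg (φ k)
  have hHΩ : H.mulVec '' Ω₂ ⊆ Ω₁ := by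
    simpa using mulVec_image_subset_of_tendsto h₁.1.isClosed hH (ha.comp hφ.tendsto_atTop)
      one_ne_zero fun k => hh (φ k)
  refine ⟨G, IsUnit.of_mul_eq_one H hGH, Subset.antisymm ?_ hGΩ⟩
  calc Ω₂ = (G * H).mulVec '' Ω₂ := by simp [hGH]
    _ = G.mulVec '' (H.mulVec '' Ω₂) := mul_mulVec_image G H Ω₂
    _ ⊆ G.mulVec '' Ω₁ := image_mono hHΩ

lemma exists_seq_tendsto_shapeDist {Ω₁ Ω₂ : Set (ι → ℝ)} (h₁ : IsSymConvexBody Ω₁)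
    (h₂ : IsSymConvexBody Ω₂) : ∃ g : ℕ → Matrix ι ι ℝ, (∀ k, IsUnit (g k)) ∧
      Tendsto (fun k => bmDist ((g k).mulVec '' Ω₁) Ω₂) atTop (𝓝 (shapeDist Ω₁ Ω₂)) := by
  obtain ⟨d, -, hd, hdmem⟩ := exists_seq_tendsto_sInf
    (S := {r | ∃ g : Matrix ι ι ℝ, IsUnit g ∧ r = bmDist (g.mulVec '' Ω₁) Ω₂})
    ⟨_, 1, isUnit_one, rfl⟩ (bddBelow_bmDist_mulVec_image h₁ h₂)
  choose g hg hdg using hdmem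
  exact ⟨g, hg, funext hdg ▸ hd⟩

lemma exists_isUnit_mulVec_image_eq_of_shapeDist_eq_zero {Ω₁ Ω₂ : Set (ι → ℝ)}
    (h₁ : IsSymConvexBody Ω₁) (h₂ : IsSymConvexBody Ω₂) (h0 : shapeDist Ω₁ Ω₂ = 0) :
    ∃ G : Matrix ι ι ℝ, IsUnit G ∧ Ω₂ = G.mulVec '' Ω₁ := by
  obtain ⟨g, hg, hlim⟩ := exists_seq_tendsto_shapeDist h₁ h₂
  rw [h0] at hlim
  have hA : ∀ k, IsSymConvexBody ((g k).mulVec '' Ω₁) := fun k => h₁.image (hg k)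
  refine exists_isUnit_mulVec_image_eq_of_tendsto h₁ h₂ (h := fun k => (g k)⁻¹)
    (fun k => mul_nonsing_inv _ ((isUnit_iff_isUnit_det _).1 (hg k)))
    (tendsto_bmFactor_of_tendsto_bmDist hA (fun _ => h₂) hlim)
    (tendsto_bmFactor_of_tendsto_bmDist (fun _ => h₂) hA (by simpa only [bmDist_comm] using hlim))
    (fun k => h₂.subset_bmFactor_smul (hA k)) fun k => ?_
  calc (g k)⁻¹.mulVec '' Ω₂
      ⊆ (g k)⁻¹.mulVec '' (bmFactor ((g k).mulVec '' Ω₁) Ω₂ • (g k).mulVec '' Ω₁) :=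
        image_mono ((hA k).subset_bmFactor_smul h₂)
    _ = bmFactor ((g k).mulVec '' Ω₁) Ω₂ • Ω₁ := by
        rw [mulVec_image_smul, inv_mulVec_image_mulVec_image (hg k)]

end Orbit

section Hausdorff

variable {E : Type*}

lemma exists_subseq_tendsto_hausdorffDist [MetricSpace E] {S : Set E} (hS : IsCompact S)
    {K : ℕ → Set E} (hK : ∀ k, IsCompact (K k)) (hne : ∀ k, (K k).Nonempty)
    (hKS : ∀ k, K k ⊆ S) : ∃ L : Set E, IsCompact L ∧ L.Nonempty ∧
      ∃ φ : ℕ → ℕ, StrictMono φ ∧ Tendsto (fun k => hausdorffDist (K (φ k)) L) atTop (𝓝 0) := by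
  let K' : ℕ → TopologicalSpace.NonemptyCompacts E := fun k => ⟨⟨K k, hK k⟩, hne k⟩
  obtain ⟨L, -, φ, hφ, hlim⟩ :=
    (TopologicalSpace.NonemptyCompacts.isCompact_subsets_of_isCompact hS).tendsto_subseq
      (x := K') hKS
  refine ⟨L, L.isCompact, L.nonempty, φ, hφ, ?_⟩
  refine (tendsto_iff_dist_tendsto_zero.1 hlim).congr fun k => ?_
  rw [NonemptyCompacts.dist_eq]
  rfl

lemma mem_of_infDist_le_hausdorffDist [PseudoMetricSpace E] {K : ℕ → Set E} {L : Set E}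
    (hL : IsClosed L) (hLne : L.Nonempty) (hfin : ∀ k, hausdorffEDist (K k) L ≠ ⊤)
    (hKL : Tendsto (fun k => hausdorffDist (K k) L) atTop (𝓝 0)) {w : E}
    (hw : ∀ k, infDist w (K k) ≤ hausdorffDist (K k) L) : w ∈ L := by
  have hle : ∀ k, infDist w L ≤ 2 * hausdorffDist (K k) L := fun k =>
    (infDist_le_infDist_add_hausdorffDist (hfin k)).trans (by linarith [hw k])
  have h0 : infDist w L ≤ 0 :=
    ge_of_tendsto (by simpa using hKL.const_mul 2) (Eventually.of_forall hle)
  exact (hL.mem_iff_infDist_zero hLne).2 (le_antisymm h0 infDist_nonneg)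

lemma IsCompact.exists_dist_le_hausdorffDist [PseudoMetricSpace E] {K L : Set E}
    (hK : IsCompact K) (hKne : K.Nonempty) (hfin : hausdorffEDist K L ≠ ⊤) {u : E} (hu : u ∈ L) :
    ∃ u' ∈ K, dist u u' ≤ hausdorffDist K L := by
  obtain ⟨u', hu', hd⟩ := hK.exists_infDist_eq_dist hKne u
  refine ⟨u', hu', hd ▸ ?_⟩
  rw [hausdorffDist_comm]
  exact infDist_le_hausdorffDist_of_mem hu (by rwa [hausdorffEDist_comm])

variable [NormedAddCommGroup E] [NormedSpace ℝ E]

lemma Convex.of_tendsto_hausdorffDist {K : ℕ → Set E} {L : Set E} (hK : ∀ k, Convex ℝ (K k))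
    (hKc : ∀ k, IsCompact (K k)) (hKne : ∀ k, (K k).Nonempty) (hL : IsClosed L)
    (hLne : L.Nonempty) (hfin : ∀ k, hausdorffEDist (K k) L ≠ ⊤)
    (hKL : Tendsto (fun k => hausdorffDist (K k) L) atTop (𝓝 0)) : Convex ℝ L := by
  intro u hu v hv a b ha hb hab
  refine mem_of_infDist_le_hausdorffDist hL hLne hfin hKL fun k => ?_
  obtain ⟨u', hu', hdu⟩ := (hKc k).exists_dist_le_hausdorffDist (hKne k) (hfin k) hu
  obtain ⟨v', hv', hdv⟩ := (hKc k).exists_dist_le_hausdorffDist (hKne k) (hfin k) hv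
  calc infDist (a • u + b • v) (K k) ≤ dist (a • u + b • v) (a • u' + b • v') :=
        infDist_le_dist_of_mem ((hK k) hu' hv' ha hb hab)
    _ ≤ a * dist u u' + b * dist v v' := by
        refine (dist_add_add_le _ _ _ _).trans_eq ?_
        rw [dist_smul₀, dist_smul₀, Real.norm_of_nonneg ha, Real.norm_of_nonneg hb]
    _ ≤ a * hausdorffDist (K k) L + b * hausdorffDist (K k) L := by gcongr
    _ = hausdorffDist (K k) L := by rw [← add_mul, hab, one_mul]

lemma Convex.add_closedBall_subset_smul {K : Set E} (hK : Convex ℝ K) {ρ d : ℝ} (hρ : 0 < ρ)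
    (hd : 0 ≤ d) (hball : closedBall 0 ρ ⊆ K) : K + closedBall 0 d ⊆ (1 + d / ρ) • K :=
  calc K + closedBall 0 d = K + (d / ρ) • closedBall 0 ρ := by
        rw [smul_closedBall _ _ hρ.le, smul_zero, Real.norm_of_nonneg (by positivity),
          div_mul_cancel₀ _ hρ.ne']
    _ ⊆ (1 : ℝ) • K + (d / ρ) • K := by
        rw [one_smul]
        exact add_subset_add_left (smul_set_mono hball)
    _ = (1 + d / ρ) • K := (hK.add_smul zero_le_one (by positivity)).symm

lemma subset_smul_of_hausdorffEDist_ne_top {A K : Set E} (hK : Convex ℝ K) (hKc : IsCompact K)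
    {ρ : ℝ} (hρ : 0 < ρ) (hball : closedBall 0 ρ ⊆ K) (hfin : hausdorffEDist A K ≠ ⊤) :
    A ⊆ (1 + hausdorffDist A K / ρ) • K := by
  refine Subset.trans (fun x hx => ?_) (hK.add_closedBall_subset_smul hρ hausdorffDist_nonneg hball)
  obtain ⟨y, hy, hxy⟩ := hKc.exists_infDist_eq_dist ⟨0, hball (mem_closedBall_self hρ.le)⟩ x
  refine ⟨y, hy, x - y, ?_, add_sub_cancel y x⟩
  rw [mem_closedBall_zero_iff, ← dist_eq_norm, ← hxy]
  exact infDist_le_hausdorffDist_of_mem hx hfin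

end Hausdorff

section Compactness

variable {ι : Type*} [Fintype ι] {Ω : Set (ι → ℝ)}

lemma Convex.sum_smul_mem_of_sum_le_one {E κ : Type*} [AddCommGroup E] [Module ℝ E] {s : Set E}
    (hs : Convex ℝ s) (h0 : (0 : E) ∈ s) {t : Finset κ} {w : κ → ℝ} {z : κ → E}
    (hw₀ : ∀ i ∈ t, 0 ≤ w i) (hw₁ : ∑ i ∈ t, w i ≤ 1) (hz : ∀ i ∈ t, z i ∈ s) :
    ∑ i ∈ t, w i • z i ∈ s := by
  rcases (Finset.sum_nonneg hw₀).eq_or_lt with hw | hw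
  · rw [Finset.sum_eq_zero fun i hi => by
      rw [(Finset.sum_eq_zero_iff_of_nonneg hw₀).1 hw.symm i hi, zero_smul]]
    exact h0
  · have h := hs.smul_mem_of_zero_mem h0 (hs.centerMass_mem hw₀ hw hz) ⟨hw.le, hw₁⟩
    rwa [Finset.centerMass, smul_smul, mul_inv_cancel₀ hw.ne', one_smul] at h

lemma IsSymConvexBody.sum_smul_mem {κ : Type*} [Fintype κ] (h : IsSymConvexBody Ω)
    {p : κ → ι → ℝ} (hp : ∀ j, p j ∈ Ω) {c : κ → ℝ} (hc : ∑ j, |c j| ≤ 1) :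
    ∑ j, c j • p j ∈ Ω := by
  have hsign : ∀ j, c j • p j = |c j| • if 0 ≤ c j then p j else -p j := fun j => by
    split_ifs with hj
    · rw [abs_of_nonneg hj]
    · rw [abs_of_neg (not_le.1 hj), neg_smul, smul_neg, neg_neg]
  simp only [hsign]
  refine h.2.1.sum_smul_mem_of_sum_le_one (mem_of_mem_nhds h.mem_nhds_zero)
    (fun j _ => abs_nonneg _) hc fun j _ => ?_
  split_ifs
  exacts [hp j, h.neg_mem (hp j)]

lemma IsSymConvexBody.of_tendsto_hausdorffDist {K : ℕ → Set (ι → ℝ)} {L : Set (ι → ℝ)} {ρ : ℝ}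
    (hK : ∀ k, IsSymConvexBody (K k)) (hρ : 0 < ρ) (hball : ∀ k, closedBall 0 ρ ⊆ K k)
    (hL : IsCompact L) (hLne : L.Nonempty)
    (hKL : Tendsto (fun k => hausdorffDist (K k) L) atTop (𝓝 0)) :
    IsSymConvexBody L ∧ closedBall 0 ρ ⊆ L := by
  have hKne : ∀ k, (K k).Nonempty := fun k => ⟨0, hball k (mem_closedBall_self hρ.le)⟩
  have hfin : ∀ k, hausdorffEDist (K k) L ≠ ⊤ := fun k =>
    hausdorffEDist_ne_top_of_nonempty_of_bounded (hKne k) hLne (hK k).isBounded hL.isBounded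
  have hmem : ∀ w, (∀ k, infDist w (K k) ≤ hausdorffDist (K k) L) → w ∈ L := fun _ hw =>
    mem_of_infDist_le_hausdorffDist hL.isClosed hLne hfin hKL hw
  have hballL : closedBall 0 ρ ⊆ L := fun w hw => hmem w fun k => by
    rw [infDist_zero_of_mem (hball k hw)]
    exact hausdorffDist_nonneg
  have hneg : ∀ u ∈ L, -u ∈ L := fun u hu => hmem _ fun k => by
    obtain ⟨u', hu', hd⟩ := (hK k).1.exists_dist_le_hausdorffDist (hKne k) (hfin k) hu
    exact (infDist_le_dist_of_mem ((hK k).neg_mem hu')).trans (by rwa [dist_neg_neg])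
  refine ⟨⟨hL, Convex.of_tendsto_hausdorffDist (fun k => (hK k).2.1) (fun k => (hK k).1) hKne
    hL.isClosed hLne hfin hKL, ⟨0, interior_mono hballL ?_⟩, ?_⟩, hballL⟩
  · exact ball_subset_interior_closedBall (mem_ball_self hρ)
  · exact Subset.antisymm (fun u hu => hneg u hu) fun u hu => neg_neg u ▸ hneg (-u) hu

lemma IsSymConvexBody.bmDist_le_log_hausdorffDist {K L : Set (ι → ℝ)} (hK : IsSymConvexBody K)
    (hL : IsSymConvexBody L) {ρ : ℝ} (hρ : 0 < ρ) (hKρ : closedBall 0 ρ ⊆ K)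
    (hLρ : closedBall 0 ρ ⊆ L) : bmDist K L ≤ 2 * Real.log (1 + hausdorffDist K L / ρ) := by
  have hfin : hausdorffEDist K L ≠ ⊤ := hausdorffEDist_ne_top_of_nonempty_of_bounded
    ⟨0, hKρ (mem_closedBall_self hρ.le)⟩ ⟨0, hLρ (mem_closedBall_self hρ.le)⟩
    hK.isBounded hL.isBounded
  have hs : 1 ≤ 1 + hausdorffDist K L / ρ :=
    le_add_of_nonneg_right (div_nonneg hausdorffDist_nonneg hρ.le)
  have hLK : L ⊆ (1 + hausdorffDist K L / ρ) • K := by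
    rw [hausdorffDist_comm]
    exact subset_smul_of_hausdorffEDist_ne_top hK.2.1 hK.1 hρ hKρ (by rwa [hausdorffEDist_comm])
  calc bmDist K L ≤ Real.log ((1 + hausdorffDist K L / ρ) * (1 + hausdorffDist K L / ρ)) :=
        bmDist_le_log hs hs hLK (subset_smul_of_hausdorffEDist_ne_top hL.2.1 hL.1 hρ hLρ hfin)
    _ = 2 * Real.log (1 + hausdorffDist K L / ρ) := by
        rw [Real.log_mul (by positivity) (by positivity)]
        ring

variable [DecidableEq ι]

lemma IsSymConvexBody.exists_rows_mem_isMaxOn_abs_det (h : IsSymConvexBody Ω) :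
    ∃ A : Matrix ι ι ℝ, (∀ j, A j ∈ Ω) ∧ A.det ≠ 0 ∧
      ∀ B : Matrix ι ι ℝ, (∀ j, B j ∈ Ω) → |B.det| ≤ |A.det| := by
  obtain ⟨r, hr, hrΩ⟩ := h.exists_closedBall_subset
  have hS : IsCompact {B : Matrix ι ι ℝ | ∀ j, B j ∈ Ω} := by
    have hpi : {B : Matrix ι ι ℝ | ∀ j, B j ∈ Ω} = univ.pi fun _ => Ω := by
      ext B
      exact ⟨fun hB j _ => hB j, fun hB j => hB j trivial⟩
    rw [hpi]
    exact isCompact_univ_pi fun _ => h.1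
  have hr1 : r • (1 : Matrix ι ι ℝ) ∈ {B : Matrix ι ι ℝ | ∀ j, B j ∈ Ω} := fun j => by
    refine hrΩ (mem_closedBall_zero_iff.2 ((pi_norm_le_iff_of_nonneg hr.le).2 fun i => ?_))
    rw [Matrix.smul_apply, one_apply]
    split_ifs <;> simp [abs_of_pos hr, hr.le]
  obtain ⟨A, hA, hmax⟩ := hS.exists_isMaxOn ⟨_, hr1⟩ continuous_id.matrix_det.abs.continuousOn
  refine ⟨A, hA, fun h0 => ?_, fun B hB => hmax hB⟩
  have hle : |(r • (1 : Matrix ι ι ℝ)).det| ≤ |A.det| := hmax hr1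
  rw [h0, det_smul, det_one, mul_one, abs_zero] at hle
  exact (pow_pos hr _).ne' (abs_nonpos_iff.1 hle)

lemma norm_inv_transpose_mulVec_le_one {A : Matrix ι ι ℝ} (hrows : ∀ j, A j ∈ Ω)
    (hmax : ∀ B : Matrix ι ι ℝ, (∀ j, B j ∈ Ω) → |B.det| ≤ |A.det|)
    {y : ι → ℝ} (hy : y ∈ Ω) : ‖Aᵀ⁻¹ *ᵥ y‖ ≤ 1 := by
  refine (pi_norm_le_iff_of_nonneg zero_le_one).2 fun i => ?_
  have hcramer : Aᵀ⁻¹ *ᵥ y = (A.det)⁻¹ • cramer Aᵀ y := by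
    rw [inv_def, det_transpose, smul_mulVec, cramer_eq_adjugate_mulVec, Ring.inverse_eq_inv']
  have hrow : ∀ j, A.updateRow i y j ∈ Ω := fun j => by
    rcases eq_or_ne j i with rfl | hj
    · rwa [updateRow_self]
    · rw [updateRow_ne hj]
      exact hrows j
  rw [hcramer, Pi.smul_apply, cramer_apply, updateCol_transpose, det_transpose, smul_eq_mul,
    norm_mul, norm_inv, Real.norm_eq_abs, Real.norm_eq_abs]
  exact inv_mul_le_one_of_le₀ (hmax _ hrow) (abs_nonneg _)

lemma IsSymConvexBody.exists_closedBall_subset_mulVec_image_subset (h : IsSymConvexBody Ω) :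
    ∃ g : Matrix ι ι ℝ, IsUnit g ∧ closedBall 0 ((Fintype.card ι : ℝ) + 1)⁻¹ ⊆ g.mulVec '' Ω ∧
      g.mulVec '' Ω ⊆ closedBall 0 1 := by
  obtain ⟨A, hrows, hdet, hmax⟩ := h.exists_rows_mem_isMaxOn_abs_det
  have hunit : IsUnit Aᵀ := (isUnit_iff_isUnit_det _).2 (by rw [det_transpose]; exact hdet.isUnit)
  refine ⟨Aᵀ⁻¹, isUnit_nonsing_inv_iff.2 hunit, fun v hv => ⟨Aᵀ *ᵥ v, ?_, ?_⟩, ?_⟩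
  · rw [mulVec_transpose, vecMul_eq_sum]
    refine h.sum_smul_mem hrows ?_
    calc ∑ j, |v j| ≤ ∑ _j : ι, ((Fintype.card ι : ℝ) + 1)⁻¹ :=
          Finset.sum_le_sum fun j _ => (norm_le_pi_norm v j).trans (mem_closedBall_zero_iff.1 hv)
      _ = Fintype.card ι / ((Fintype.card ι : ℝ) + 1) := by simp [div_eq_mul_inv]
      _ ≤ 1 := (div_le_one (by positivity)).2 (by linarith)
  · rw [mulVec_mulVec, nonsing_inv_mul _ ((isUnit_iff_isUnit_det _).1 hunit), one_mulVec]
  · rintro _ ⟨y, hy, rfl⟩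
    exact mem_closedBall_zero_iff.2 (norm_inv_transpose_mulVec_le_one hrows hmax hy)

lemma exists_subseq_tendsto_shapeDist_zero (Ω : ℕ → Set (ι → ℝ))
    (hΩ : ∀ k, IsSymConvexBody (Ω k)) : ∃ φ : ℕ → ℕ, StrictMono φ ∧
      ∃ L : Set (ι → ℝ), IsSymConvexBody L ∧
        Tendsto (fun k => shapeDist (Ω (φ k)) L) atTop (𝓝 0) := by
  set ρ : ℝ := ((Fintype.card ι : ℝ) + 1)⁻¹
  have hρ : 0 < ρ := by positivity
  choose g hg hlow hup using fun k => (hΩ k).exists_closedBall_subset_mulVec_image_subset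
  have hK : ∀ k, IsSymConvexBody ((g k).mulVec '' Ω k) := fun k => (hΩ k).image (hg k)
  obtain ⟨L, hL, hLne, φ, hφ, hKL⟩ := exists_subseq_tendsto_hausdorffDist
    (isCompact_closedBall (0 : ι → ℝ) 1) (fun k => (hK k).1)
    (fun k => ⟨0, hlow k (mem_closedBall_self hρ.le)⟩) hup
  obtain ⟨hLbody, hballL⟩ :=
    IsSymConvexBody.of_tendsto_hausdorffDist (fun k => hK (φ k)) hρ (fun k => hlow (φ k)) hL hLne
      hKL
  have hlim : Tendsto (fun k => 2 * Real.log (1 + hausdorffDist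
      ((g (φ k)).mulVec '' Ω (φ k)) L / ρ)) atTop (𝓝 0) := by
    simpa using (((hKL.div_const ρ).const_add 1).log (by norm_num)).const_mul 2
  refine ⟨φ, hφ, L, hLbody, squeeze_zero (fun k => shapeDist_nonneg (hΩ (φ k)) hLbody)
    (fun k => ?_) hlim⟩
  exact (shapeDist_le (hΩ (φ k)) hLbody (hg (φ k))).trans
    ((hK (φ k)).bmDist_le_log_hausdorffDist hLbody hρ (hlow (φ k)) hballL)

end Compactness

/-- **The space of shapes with the Banach–Mazur factormetric is a compact metric space.**
The factormetric `ρ(Sh Ω₁, Sh Ω₂) = inf_{g invertible} ρ(gΩ₁, Ω₂)` on shapes of centrally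
symmetric convex bodies in `ℝⁿ` is symmetric, satisfies the triangle inequality, vanishes
exactly when the bodies lie in the same `GL(n, ℝ)`-orbit, and every sequence of shapes
has a convergent subsequence. -/
theorem shape_space_compact_metric {n : ℕ} :
    (∀ Ω₁ Ω₂ : Set (Fin n → ℝ), IsSymConvexBody Ω₁ → IsSymConvexBody Ω₂ →
      shapeDist Ω₁ Ω₂ = shapeDist Ω₂ Ω₁) ∧
    (∀ Ω₁ Ω₂ Ω₃ : Set (Fin n → ℝ), IsSymConvexBody Ω₁ → IsSymConvexBody Ω₂ →
      IsSymConvexBody Ω₃ → shapeDist Ω₁ Ω₃ ≤ shapeDist Ω₁ Ω₂ + shapeDist Ω₂ Ω₃) ∧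
    (∀ Ω₁ Ω₂ : Set (Fin n → ℝ), IsSymConvexBody Ω₁ → IsSymConvexBody Ω₂ →
      (shapeDist Ω₁ Ω₂ = 0 ↔
        ∃ g : Matrix (Fin n) (Fin n) ℝ, IsUnit g ∧ Ω₂ = g.mulVec '' Ω₁)) ∧
    (∀ Ω : ℕ → Set (Fin n → ℝ), (∀ i, IsSymConvexBody (Ω i)) →
      ∃ φ : ℕ → ℕ, StrictMono φ ∧ ∃ Ωlim : Set (Fin n → ℝ), IsSymConvexBody Ωlim ∧
        Tendsto (fun i => shapeDist (Ω (φ i)) Ωlim) atTop (𝓝 0)) := by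
  refine ⟨fun Ω₁ Ω₂ _ _ => shapeDist_comm Ω₁ Ω₂, fun _ _ _ => shapeDist_triangle,
    fun _ _ h₁ h₂ => ⟨exists_isUnit_mulVec_image_eq_of_shapeDist_eq_zero h₁ h₂, ?_⟩,
    exists_subseq_tendsto_shapeDist_zero⟩
  rintro ⟨g, hg, rfl⟩
  exact shapeDist_mulVec_image_self h₁ hg
end

section
/- Consider a single Brunovsky block of dimension n: the system ẋ = Ax + Bu on ℝⁿ where A is the nilpotent shift matrix with entries A_{i,i+1} = 1 and all other entries 0, B = (0, …, 0, 1)ᵀ, and u ∈ U ⊂ ℝ with U a fixed centrally symmetric convex body. Let δ(T) = diag(T^{−n}, T^{−n+1}, …, T^{−1}). Then for every T > 0 the reachable set satisfies δ(T)·D(T) = D(1); in particular the shape Sh D(T) does not depend on T. -/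
open MeasureTheory Matrix Set Filter Topology Pointwise

/-- The `n × n` nilpotent shift matrix of a Brunovsky block: ones on the superdiagonal. -/
def brunovskyA (n : ℕ) : Matrix (Fin n) (Fin n) ℝ :=
  Matrix.of fun i j => if (i : ℕ) + 1 = (j : ℕ) then 1 else 0

/-- The input column `B = (0, …, 0, 1)ᵀ` of a Brunovsky block. -/
def brunovskyB (n : ℕ) : Matrix (Fin n) (Fin 1) ℝ :=
  Matrix.of fun i _ => if (i : ℕ) = n - 1 then 1 else 0

/-! Since `δ(T) A = T⁻¹ A δ(T)` and `δ(T) B = T⁻¹ B`, conjugation by `δ(T)` turns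
`e^{(T-s)A} B` into `T⁻¹ e^{(1-s/T)A} B`. The substitution `s = Tσ` then carries a control on
`[0, T]` to one on `[0, 1]`, its Jacobian `T` cancelling the factor `T⁻¹`. -/

theorem ContinuousLinearEquiv.intervalIntegral_comp_comm {E F : Type*} [NormedAddCommGroup E]
    [NormedSpace ℝ E] [NormedAddCommGroup F] [NormedSpace ℝ F] (L : E ≃L[ℝ] F)
    (f : ℝ → E) (a b : ℝ) : ∫ x in a..b, L (f x) = L (∫ x in a..b, f x) := by
  simp only [intervalIntegral, L.integral_comp_comm, map_sub]

section Scaling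

variable {ι κ : Type*} [Fintype ι] [DecidableEq ι] [Fintype κ]

/- No integrability is assumed: an invertible map preserves (non-)integrability, so when the
integrand is not integrable both sides are the junk value `0`. -/
theorem Matrix.mulVec_intervalIntegral_of_isUnit {P : Matrix ι ι ℝ} (hP : IsUnit P)
    (f : ℝ → ι → ℝ) (a b : ℝ) : P *ᵥ ∫ x in a..b, f x = ∫ x in a..b, P *ᵥ f x :=
  ((P.toLinearEquiv' hP.invertible).toContinuousLinearEquiv.intervalIntegral_comp_comm
    f a b).symm

theorem Matrix.mul_exp_smul_of_mul_eq_smul_mul {P A : Matrix ι ι ℝ} (hP : IsUnit P) {c : ℝ}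
    (hA : P * A = c • (A * P)) (t : ℝ) :
    P * NormedSpace.exp (t • A) = NormedSpace.exp ((c * t) • A) * P := by
  obtain ⟨P, rfl⟩ := hP
  have hconj : (P : Matrix ι ι ℝ) * (t • A) * (↑P⁻¹ : Matrix ι ι ℝ) = (c * t) • A := by
    rw [mul_smul_comm, hA, smul_smul, smul_mul_assoc, Units.mul_inv_cancel_right, mul_comm]
  rw [← hconj, exp_units_conj, Units.inv_mul_cancel_right]

theorem mulVec_reachable_integrand {A P : Matrix ι ι ℝ} {B : Matrix ι κ ℝ} {T : ℝ}
    (hP : IsUnit P) (hT : T ≠ 0) (hA : P * A = T⁻¹ • (A * P)) (hB : P * B = T⁻¹ • B)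
    (s : ℝ) (w : κ → ℝ) :
    P *ᵥ (NormedSpace.exp ((T - s) • A) *ᵥ (B *ᵥ w)) =
      T⁻¹ • (NormedSpace.exp ((1 - s / T) • A) *ᵥ (B *ᵥ w)) := by
  rw [mulVec_mulVec, mulVec_mulVec, mulVec_mulVec,
    Matrix.mul_exp_smul_of_mul_eq_smul_mul hP hA, Matrix.mul_assoc, hB, Matrix.mul_smul,
    smul_mulVec, inv_mul_eq_div, sub_div, div_self hT]

theorem mulVec_reachable_integral {A P : Matrix ι ι ℝ} {B : Matrix ι κ ℝ} {T : ℝ}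
    (hP : IsUnit P) (hT : T ≠ 0) (hA : P * A = T⁻¹ • (A * P)) (hB : P * B = T⁻¹ • B)
    (u : ℝ → κ → ℝ) :
    P *ᵥ (∫ s in (0:ℝ)..T, NormedSpace.exp ((T - s) • A) *ᵥ (B *ᵥ u s)) =
      ∫ σ in (0:ℝ)..1, NormedSpace.exp ((1 - σ) • A) *ᵥ (B *ᵥ u (T * σ)) := by
  set g := fun σ => NormedSpace.exp ((1 - σ) • A) *ᵥ (B *ᵥ u (T * σ))
  calc _ = ∫ s in (0:ℝ)..T, T⁻¹ • g (s / T) := by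
        rw [Matrix.mulVec_intervalIntegral_of_isUnit hP]
        refine intervalIntegral.integral_congr fun s _ => ?_
        simp only [g, mulVec_reachable_integrand hP hT hA hB, mul_div_cancel₀ s hT]
    _ = ∫ σ in (0:ℝ)..1, g σ := by
        rw [intervalIntegral.integral_smul, intervalIntegral.integral_comp_div g hT, zero_div,
          div_self hT, inv_smul_smul₀ hT]

theorem image_mulVec_reachable_of_scaling {A P : Matrix ι ι ℝ} {B : Matrix ι κ ℝ}
    {T : ℝ} (hP : IsUnit P) (hT : T ≠ 0) (hA : P * A = T⁻¹ • (A * P))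
    (hB : P * B = T⁻¹ • B) (U : Set (κ → ℝ)) :
    P.mulVec '' reachable A B U T = reachable A B U 1 := by
  ext x
  constructor
  · rintro ⟨_, ⟨u, hu, huU, rfl⟩, rfl⟩
    exact ⟨fun σ => u (T * σ), hu.comp (measurable_const_mul T), fun σ => huU _,
      mulVec_reachable_integral hP hT hA hB u⟩
  · rintro ⟨v, hv, hvU, rfl⟩
    refine ⟨_, ⟨fun s => v (s / T), hv.comp (measurable_id.div_const T), fun s => hvU _, rfl⟩, ?_⟩
    simp only [mulVec_reachable_integral hP hT hA hB, mul_div_cancel_left₀ _ hT]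

end Scaling

theorem shapeOrbit_image_mulVec {ι : Type*} [Fintype ι] [DecidableEq ι] {g : Matrix ι ι ℝ}
    (hg : IsUnit g) (Ω : Set (ι → ℝ)) : shapeOrbit (g.mulVec '' Ω) = shapeOrbit Ω := by
  obtain ⟨g, rfl⟩ := hg
  ext S
  constructor
  · rintro ⟨h, hh, rfl⟩
    exact ⟨h * g, hh.mul g.isUnit, by simp only [Set.image_image, mulVec_mulVec]⟩
  · rintro ⟨h, hh, rfl⟩
    refine ⟨h * ↑g⁻¹, hh.mul g⁻¹.isUnit, ?_⟩
    simp only [Set.image_image, mulVec_mulVec, Units.inv_mul_cancel_right]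

noncomputable def brunovskyDelta (n : ℕ) (T : ℝ) : Matrix (Fin n) (Fin n) ℝ :=
  Matrix.diagonal fun i : Fin n => T ^ ((i : ℤ) - (n : ℤ))

section Brunovsky

variable {n : ℕ} {T : ℝ}

theorem isUnit_brunovskyDelta (hT : T ≠ 0) : IsUnit (brunovskyDelta n T) := by
  rw [isUnit_iff_isUnit_det, brunovskyDelta, det_diagonal, isUnit_iff_ne_zero]
  exact Finset.prod_ne_zero_iff.2 fun i _ => zpow_ne_zero _ hT

theorem brunovskyDelta_mul_brunovskyA (hT : T ≠ 0) :
    brunovskyDelta n T * brunovskyA n = T⁻¹ • (brunovskyA n * brunovskyDelta n T) := by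
  ext i j
  simp only [brunovskyDelta, brunovskyA, diagonal_mul, mul_diagonal,
    Matrix.smul_apply, Matrix.of_apply, smul_eq_mul]
  split_ifs with hij
  · rw [mul_one, one_mul, ← _root_.zpow_neg_one, ← zpow_add₀ hT]
    congr 1
    omega
  · simp

theorem brunovskyDelta_mul_brunovskyB :
    brunovskyDelta n T * brunovskyB n = T⁻¹ • brunovskyB n := by
  ext i j
  simp only [brunovskyDelta, brunovskyB, diagonal_mul, Matrix.smul_apply,
    Matrix.of_apply, smul_eq_mul]
  split_ifs with hi
  · rw [mul_one, mul_one, ← _root_.zpow_neg_one]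
    congr 1
    omega
  · simp

end Brunovsky

theorem brunovsky_block_reachable_selfsimilar_general (n : ℕ)
    (U : Set (Fin 1 → ℝ)) (T : ℝ) (hT : 0 < T) :
    (Matrix.diagonal fun i : Fin n => T ^ ((i : ℤ) - (n : ℤ))).mulVec ''
        reachable (brunovskyA n) (brunovskyB n) U T =
      reachable (brunovskyA n) (brunovskyB n) U 1 ∧
    shapeOrbit (reachable (brunovskyA n) (brunovskyB n) U T) =
      shapeOrbit (reachable (brunovskyA n) (brunovskyB n) U 1) := by
  have hδ : IsUnit (brunovskyDelta n T) := isUnit_brunovskyDelta hT.ne'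
  have himage := image_mulVec_reachable_of_scaling hδ hT.ne'
    (brunovskyDelta_mul_brunovskyA hT.ne') brunovskyDelta_mul_brunovskyB U
  exact ⟨himage, by rw [← himage, shapeOrbit_image_mulVec hδ]⟩

/-- **Self-similarity of the reachable sets of a single Brunovsky block.**
For the system `ẋ = Ax + Bu` with `A` the nilpotent shift, `B = (0,…,0,1)ᵀ`, and
`u ∈ U ⊂ ℝ` a centrally symmetric convex body, the matrix
`δ(T) = diag(T^{-n}, …, T^{-1})` satisfies `δ(T)·D(T) = D(1)` for every `T > 0`;
in particular the shape `Sh D(T)` does not depend on `T`. -/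
theorem brunovsky_block_reachable_selfsimilar (n : ℕ) (hn : 0 < n)
    (U : Set (Fin 1 → ℝ)) (hU : IsSymConvexBody U) (T : ℝ) (hT : 0 < T) :
    (Matrix.diagonal fun i : Fin n => T ^ ((i : ℤ) - (n : ℤ))).mulVec ''
        reachable (brunovskyA n) (brunovskyB n) U T =
      reachable (brunovskyA n) (brunovskyB n) U 1 ∧
    shapeOrbit (reachable (brunovskyA n) (brunovskyB n) U T) =
      shapeOrbit (reachable (brunovskyA n) (brunovskyB n) U 1) :=
  brunovsky_block_reachable_selfsimilar_general n U T hT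
end

section
/- For a time-invariant linear control system ẋ = Ax + Bu on ℝⁿ, the Lie-algebraic genericity condition holds — namely, the Lie algebra generated by the vector fields (1, Ax) and (0, Bu) (u ∈ ℝᵐ constant) on ℝ × ℝⁿ has dimension n + 1 at every point (τ, x) — if and only if the Kalman controllability condition rank[B, AB, …, A^{n−1}B] = n holds. -/
open MeasureTheory Matrix Set Filter Topology Pointwise

/-- Lie bracket of vector fields on a normed space:
`[X, Y](p) = DY(p)·X(p) − DX(p)·Y(p)`. -/
noncomputable def lieBracketVF {E : Type*} [NormedAddCommGroup E] [NormedSpace ℝ E]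
    (X Y : E → E) : E → E :=
  fun p => fderiv ℝ Y p (X p) - fderiv ℝ X p (Y p)

/-- The Lie algebra of vector fields generated by a set `S`: the smallest set of vector
fields containing `S` and closed under addition, scalar multiplication and Lie bracket. -/
def genLie {E : Type*} [NormedAddCommGroup E] [NormedSpace ℝ E] (S : Set (E → E)) :
    Set (E → E) :=
  ⋂₀ {L | S ⊆ L ∧ (∀ X ∈ L, ∀ Y ∈ L, X + Y ∈ L) ∧ (∀ (c : ℝ), ∀ X ∈ L, c • X ∈ L) ∧
    ∀ X ∈ L, ∀ Y ∈ L, lieBracketVF X Y ∈ L}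

/-- The values at the point `p` of all vector fields in the Lie algebra generated by `S`. -/
def genLieValues {E : Type*} [NormedAddCommGroup E] [NormedSpace ℝ E]
    (S : Set (E → E)) (p : E) : Set E :=
  {v | ∃ X ∈ genLie S, v = X p}


/-!
Every field in the Lie algebra is affine, `(τ, x) ↦ (c, c • A x + w)`: the generators are, and
the bracket of two such fields is `(0, c' • A w - c • A w')`. Hence the translation parts lie in
the smallest `A`-invariant subspace containing the columns of `B`, which by Cayley–Hamilton is the
span of the columns of `B, AB, …, A^{n-1}B`; evaluating at the origin gives one direction.
Conversely, bracketing `(0, w)` with the drift `(1, A x)` produces `(0, A w)`, so all the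
constant fields `(0, A^k B u)` lie in the Lie algebra, and together with the drift they span
`ℝ × ℝⁿ` at every point once the Kalman condition holds.
-/

open Submodule

section genLie

variable {E : Type*} [NormedAddCommGroup E] [NormedSpace ℝ E] {S : Set (E → E)}

theorem subset_genLie : S ⊆ genLie S :=
  fun _ hX => mem_sInter.2 fun _ hL => hL.1 hX

theorem lieBracketVF_mem_genLie {X Y : E → E} (hX : X ∈ genLie S) (hY : Y ∈ genLie S) :
    lieBracketVF X Y ∈ genLie S :=
  mem_sInter.2 fun L hL => hL.2.2.2 X (mem_sInter.1 hX L hL) Y (mem_sInter.1 hY L hL)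

theorem genLie_subset {L : Set (E → E)} (hS : S ⊆ L) (hadd : ∀ X ∈ L, ∀ Y ∈ L, X + Y ∈ L)
    (hsmul : ∀ (c : ℝ), ∀ X ∈ L, c • X ∈ L)
    (hbracket : ∀ X ∈ L, ∀ Y ∈ L, lieBracketVF X Y ∈ L) : genLie S ⊆ L :=
  fun _ hX => mem_sInter.1 hX L ⟨hS, hadd, hsmul, hbracket⟩

theorem apply_mem_span_genLieValues {X : E → E} (hX : X ∈ genLie S) (p : E) :
    X p ∈ span ℝ (genLieValues S p) :=
  subset_span ⟨X, hX, rfl⟩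

end genLie

section affineVF

variable {E : Type*} [NormedAddCommGroup E] [NormedSpace ℝ E] (A : E →L[ℝ] E)

def affineVF (c : ℝ) (w : E) : ℝ × E → ℝ × E :=
  fun p => (c, c • A p.2 + w)

@[simp]
theorem affineVF_apply (c : ℝ) (w : E) (p : ℝ × E) : affineVF A c w p = (c, c • A p.2 + w) :=
  rfl

theorem fderiv_affineVF_apply (c : ℝ) (w : E) (p v : ℝ × E) :
    fderiv ℝ (affineVF A c w) p v = (0, c • A v.2) := by
  let L : ℝ × E →L[ℝ] ℝ × E :=
    c • (ContinuousLinearMap.inr ℝ ℝ E ∘L A ∘L ContinuousLinearMap.snd ℝ ℝ E)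
  have hL : affineVF A c w = fun q => (c, w) + L q := by
    funext q
    simp [L, add_comm]
  have hderiv : HasFDerivAt (affineVF A c w) L p := by
    simpa [hL] using (L.hasFDerivAt (x := p)).const_add (c, w)
  simp [hderiv.fderiv, L]

theorem lieBracketVF_affineVF (c c' : ℝ) (w w' : E) :
    lieBracketVF (affineVF A c w) (affineVF A c' w') = affineVF A 0 (c' • A w - c • A w') := by
  funext p
  simp only [lieBracketVF, fderiv_affineVF_apply, affineVF_apply, map_add, map_smul,
    Prod.mk_sub_mk, sub_zero, zero_smul, zero_add]
  congr 1
  module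

theorem affineVF_add (c c' : ℝ) (w w' : E) :
    affineVF A c w + affineVF A c' w' = affineVF A (c + c') (w + w') := by
  funext p
  simp only [Pi.add_apply, affineVF_apply, Prod.mk_add_mk, Prod.mk.injEq, true_and]
  module

theorem smul_affineVF (a c : ℝ) (w : E) : a • affineVF A c w = affineVF A (a * c) (a • w) := by
  funext p
  simp only [Pi.smul_apply, affineVF_apply, Prod.smul_mk, smul_eq_mul, Prod.mk.injEq, true_and]
  module

variable {A} {S : Set (ℝ × E → ℝ × E)}

theorem genLie_subset_affineVF {W : Submodule ℝ E} (hW : ∀ w ∈ W, A w ∈ W)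
    (hS : ∀ X ∈ S, ∃ c, ∃ w ∈ W, X = affineVF A c w) :
    genLie S ⊆ {X | ∃ c, ∃ w ∈ W, X = affineVF A c w} := by
  refine genLie_subset hS ?_ ?_ ?_
  · rintro _ ⟨c, w, hw, rfl⟩ _ ⟨c', w', hw', rfl⟩
    exact ⟨c + c', w + w', W.add_mem hw hw', affineVF_add A c c' w w'⟩
  · rintro a _ ⟨c, w, hw, rfl⟩
    exact ⟨a * c, a • w, W.smul_mem a hw, smul_affineVF A a c w⟩
  · rintro _ ⟨c, w, hw, rfl⟩ _ ⟨c', w', hw', rfl⟩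
    exact ⟨0, c' • A w - c • A w', W.sub_mem (W.smul_mem c' (hW w hw)) (W.smul_mem c (hW w' hw')),
      lieBracketVF_affineVF A c c' w w'⟩

theorem eq_top_of_span_genLieValues_zero_eq_top {W : Submodule ℝ E} (hW : ∀ w ∈ W, A w ∈ W)
    (hS : ∀ X ∈ S, ∃ c, ∃ w ∈ W, X = affineVF A c w) (h : span ℝ (genLieValues S 0) = ⊤) :
    W = ⊤ := by
  have hvalues : genLieValues S 0 ⊆ (⊤ : Submodule ℝ ℝ).prod W := by
    rintro _ ⟨X, hX, rfl⟩
    obtain ⟨c, w, hw, rfl⟩ := genLie_subset_affineVF hW hS hX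
    simpa using hw
  have hprod : (⊤ : Submodule ℝ (ℝ × E)) ≤ (⊤ : Submodule ℝ ℝ).prod W :=
    h ▸ span_le.2 hvalues
  exact eq_top_iff.2 fun v _ => (Submodule.mem_prod.1 (hprod (mem_top (x := (0, v))))).2

theorem affineVF_zero_apply_mem_genLie (hdrift : affineVF A 1 0 ∈ genLie S) {w : E}
    (hw : affineVF A 0 w ∈ genLie S) : affineVF A 0 (A w) ∈ genLie S := by
  simpa [lieBracketVF_affineVF] using lieBracketVF_mem_genLie hw hdrift

theorem span_genLieValues_eq_top (hdrift : affineVF A 1 0 ∈ genLie S) (p : ℝ × E)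
    (h : ∀ w : E, (0, w) ∈ span ℝ (genLieValues S p)) : span ℝ (genLieValues S p) = ⊤ := by
  refine eq_top_iff'.2 fun v => ?_
  have hv : v = v.1 • affineVF A 1 0 p + (0, v.2 - v.1 • A p.2) := by
    ext <;> simp
  rw [hv]
  exact add_mem (smul_mem _ _ (apply_mem_span_genLieValues hdrift p)) (h _)

end affineVF

section Kalman

variable {n m : ℕ} (A : Matrix (Fin n) (Fin n) ℝ) (B : Matrix (Fin n) (Fin m) ℝ)

def controllableSubspace : Submodule ℝ (Fin n → ℝ) :=
  span ℝ (⋃ k ∈ Finset.range n, Set.range (A ^ k * B).mulVec)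

theorem kalman_iff_controllableSubspace_eq_top : Kalman A B ↔ controllableSubspace A B = ⊤ :=
  Iff.rfl

theorem pow_mul_mulVec_mem_controllableSubspace (k : ℕ) (u : Fin m → ℝ) :
    (A ^ k * B) *ᵥ u ∈ controllableSubspace A B := by
  rcases Nat.eq_zero_or_pos n with rfl | hn
  · exact Subsingleton.elim 0 ((A ^ k * B) *ᵥ u) ▸ zero_mem _
  have hcharpoly : A.charpoly ≠ 1 := fun h => by
    simpa [h, hn.ne] using A.charpoly_natDegree_eq_dim
  -- Cayley–Hamilton: `A ^ k` is a combination of `A ^ i`, `i < n`.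
  rw [A.pow_eq_aeval_mod_charpoly, Polynomial.aeval_eq_sum_range'
    (Polynomial.natDegree_modByMonic_lt _ A.charpoly_monic hcharpoly), Matrix.sum_mul,
    Matrix.sum_mulVec]
  refine sum_mem fun i hi => ?_
  rw [Matrix.smul_mul, Matrix.smul_mulVec]
  refine smul_mem _ _ (subset_span (mem_iUnion₂.2 ⟨i, ?_, u, rfl⟩))
  simpa using hi

theorem mulVec_mem_controllableSubspace {v : Fin n → ℝ} (hv : v ∈ controllableSubspace A B) :
    A *ᵥ v ∈ controllableSubspace A B := by
  have hle : controllableSubspace A B ≤ (controllableSubspace A B).comap A.mulVecLin := by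
    refine span_le.2 fun x hx => ?_
    obtain ⟨k, -, u, rfl⟩ := mem_iUnion₂.1 hx
    simpa [Matrix.mulVec_mulVec, ← Matrix.mul_assoc, ← pow_succ'] using
      pow_mul_mulVec_mem_controllableSubspace A B (k + 1) u
  exact hle hv

def controlSystemVF : Set (ℝ × (Fin n → ℝ) → ℝ × (Fin n → ℝ)) :=
  {X | (X = fun p => (1, A *ᵥ p.2)) ∨ ∃ u : Fin m → ℝ, X = fun _ => (0, B *ᵥ u)}

theorem drift_eq_affineVF :
    (fun p : ℝ × (Fin n → ℝ) => ((1 : ℝ), A *ᵥ p.2)) =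
      affineVF A.mulVecLin.toContinuousLinearMap 1 0 := by
  funext p
  simp

theorem const_eq_affineVF (w : Fin n → ℝ) :
    (fun _ : ℝ × (Fin n → ℝ) => ((0 : ℝ), w)) = affineVF A.mulVecLin.toContinuousLinearMap 0 w := by
  funext p
  simp

theorem kalman_of_span_genLieValues_zero_eq_top
    (h : span ℝ (genLieValues (controlSystemVF A B) 0) = ⊤) : Kalman A B := by
  refine (kalman_iff_controllableSubspace_eq_top A B).2 <|
    eq_top_of_span_genLieValues_zero_eq_top (A := A.mulVecLin.toContinuousLinearMap)
      (fun _ hv => mulVec_mem_controllableSubspace A B hv) ?_ h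
  rintro _ (rfl | ⟨u, rfl⟩)
  · exact ⟨1, 0, zero_mem _, drift_eq_affineVF A⟩
  · refine ⟨0, B *ᵥ u, ?_, const_eq_affineVF A _⟩
    simpa using pow_mul_mulVec_mem_controllableSubspace A B 0 u

theorem drift_mem_genLie :
    affineVF A.mulVecLin.toContinuousLinearMap 1 0 ∈ genLie (controlSystemVF A B) :=
  subset_genLie (Or.inl (drift_eq_affineVF A).symm)

theorem pow_mul_mulVec_mem_genLie (k : ℕ) (u : Fin m → ℝ) :
    affineVF A.mulVecLin.toContinuousLinearMap 0 ((A ^ k * B) *ᵥ u) ∈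
      genLie (controlSystemVF A B) := by
  induction k with
  | zero =>
    rw [pow_zero, Matrix.one_mul, ← const_eq_affineVF]
    exact subset_genLie (Or.inr ⟨u, rfl⟩)
  | succ k ih =>
    simpa [Matrix.mulVec_mulVec, ← Matrix.mul_assoc, ← pow_succ'] using
      affineVF_zero_apply_mem_genLie (drift_mem_genLie A B) ih

theorem span_genLieValues_eq_top_of_kalman (hK : Kalman A B) (p : ℝ × (Fin n → ℝ)) :
    span ℝ (genLieValues (controlSystemVF A B) p) = ⊤ := by
  refine span_genLieValues_eq_top (drift_mem_genLie A B) p fun w => ?_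
  have hle : controllableSubspace A B ≤
      (span ℝ (genLieValues (controlSystemVF A B) p)).comap (LinearMap.inr ℝ ℝ _) := by
    refine span_le.2 fun x hx => ?_
    obtain ⟨k, -, u, rfl⟩ := mem_iUnion₂.1 hx
    simpa using apply_mem_span_genLieValues (pow_mul_mulVec_mem_genLie A B k u) p
  exact hle ((kalman_iff_controllableSubspace_eq_top A B).1 hK ▸ mem_top)

end Kalman

/-- **The Lie-algebraic genericity condition is equivalent to the Kalman condition.**
For a time-invariant system `ẋ = Ax + Bu`, the Lie algebra generated by the vector
fields `(1, Ax)` and `(0, Bu)` (`u ∈ ℝᵐ` constant) on `ℝ × ℝⁿ` has full dimension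
`n + 1` at every point iff `rank [B, AB, …, A^{n−1}B] = n`. -/
theorem lie_genericity_iff_kalman {n m : ℕ}
    (A : Matrix (Fin n) (Fin n) ℝ) (B : Matrix (Fin n) (Fin m) ℝ) :
    (∀ p : ℝ × (Fin n → ℝ),
      Submodule.span ℝ (genLieValues
        {X : (ℝ × (Fin n → ℝ)) → ℝ × (Fin n → ℝ) |
          (X = fun p => (1, A *ᵥ p.2)) ∨ ∃ u : Fin m → ℝ, X = fun _ => (0, B *ᵥ u)} p) = ⊤)
      ↔ Kalman A B :=
  ⟨fun h => kalman_of_span_genLieValues_zero_eq_top A B (h 0),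
    span_genLieValues_eq_top_of_kalman A B⟩
end
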